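/- arXiv:2408.07813 — 8 statements merged into one kernel-verified Lean document; each statement's English description precedes it below -/
import Mathlib

section
/- Let G be a locally compact Hausdorff abelian topological group and let A ⊆ G. Then A is relatively compact if and only if A is coarsely bounded, i.e., f(A) is a bounded subset of ℝ for every continuous pseudonorm f on G. -/
/-!
Continuous images of compact sets are bounded. Conversely, suppose `closure A` is not compact.
Fix a compact neighbourhood `K` of `1`, symmetric neighbourhoods `V 0 ⊆ K` with
`V (j + 1) * V (j + 1) ⊆ V j`, and points `a n ∈ A` outside `T n ^ n * K ^ n`, where `T n` is the
finite set of `1` and the `(a m)^{±1}`, `m < n`. Give the letter `v ∈ V j` the weight `2⁻¹ ^ j`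
and the letters `(a m)^{±1}` the weight `m + 1`. In a word of cost `< N`, the `a`-letters multiply
into `T N ^ N` and, by the Birkhoff–Kakutani halving argument, the `V`-letters into `V 0 ^ N`;
so the word norm of `a N` is at least `N`, while it is at most `2⁻¹ ^ j` on `V j`. The word norm
is finite only on the subgroup generated by the letters, but in an abelian group a seminorm on a
subgroup extends to the whole group (Zorn, adjoining one cyclic subgroup at a time). This gives a
continuous pseudonorm which is unbounded on `A`.
-/

/-- A pseudonorm on a topological group `G` is a function `f : G → ℝ` with `f 1 = 0`,
`f g⁻¹ = f g` and `f (g * h) ≤ f g + f h`.  A set `A ⊆ G` is coarsely bounded if every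
continuous pseudonorm maps it onto a bounded subset of `ℝ`. -/
def CoarselyBounded {G : Type*} [Group G] [TopologicalSpace G] (A : Set G) : Prop :=
  ∀ f : G → ℝ, Continuous f → f 1 = 0 → (∀ g : G, f g⁻¹ = f g) →
    (∀ g h : G, f (g * h) ≤ f g + f h) → Bornology.IsBounded (f '' A)

open scoped Pointwise NNReal ENNReal Topology
open Filter Set

structure IsGroupSeminorm {G M : Type*} [Group G] [Zero M] [Add M] [LE M] (f : G → M) :
    Prop where
  map_one : f 1 = 0
  map_inv (g : G) : f g⁻¹ = f g
  map_mul_le (g h : G) : f (g * h) ≤ f g + f h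

namespace IsGroupSeminorm

variable {G : Type*} [Group G]

theorem map_pow_le {M : Type*} [AddCommMonoid M] [PartialOrder M] [IsOrderedAddMonoid M]
    {f : G → M} (hf : IsGroupSeminorm f) (g : G) : ∀ n : ℕ, f (g ^ n) ≤ n • f g
  | 0 => by simp [hf.map_one]
  | n + 1 => by
    rw [pow_succ, succ_nsmul]
    exact (hf.map_mul_le _ _).trans (add_le_add_left (hf.map_pow_le g n) _)

theorem map_zpow_le {M : Type*} [AddCommMonoid M] [PartialOrder M] [IsOrderedAddMonoid M]
    {f : G → M} (hf : IsGroupSeminorm f) (g : G) : ∀ n : ℤ, f (g ^ n) ≤ n.natAbs • f g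
  | (n : ℕ) => by simpa using hf.map_pow_le g n
  | .negSucc n => by simpa [hf.map_inv] using hf.map_pow_le g (n + 1)

theorem toReal {f : G → ℝ≥0∞} (hf : IsGroupSeminorm f) (hfin : ∀ g, f g ≠ ⊤) :
    IsGroupSeminorm fun g => (f g).toReal where
  map_one := by simp [hf.map_one]
  map_inv g := by simp [hf.map_inv]
  map_mul_le g h := by
    rw [← ENNReal.toReal_add (hfin g) (hfin h)]
    exact ENNReal.toReal_mono (ENNReal.add_ne_top.2 ⟨hfin g, hfin h⟩) (hf.map_mul_le g h)

theorem abs_sub_le {f : G → ℝ} (hf : IsGroupSeminorm f) (g x : G) :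
    |f x - f g| ≤ f (g⁻¹ * x) := by
  have hx := hf.map_mul_le g (g⁻¹ * x)
  have hg := hf.map_mul_le x (g⁻¹ * x)⁻¹
  rw [mul_inv_cancel_left] at hx
  rw [hf.map_inv, mul_inv_rev, inv_inv, mul_inv_cancel_left] at hg
  exact abs_sub_le_iff.2 ⟨by linarith, by linarith⟩

theorem continuous_of_tendsto_one [TopologicalSpace G] [ContinuousMul G] {f : G → ℝ}
    (hf : IsGroupSeminorm f) (h : Tendsto f (𝓝 1) (𝓝 0)) : Continuous f := by
  refine continuous_iff_continuousAt.2 fun g => tendsto_iff_dist_tendsto_zero.2 ?_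
  have hg : Tendsto (g⁻¹ * ·) (𝓝 g) (𝓝 1) :=
    (continuous_const_mul g⁻¹).tendsto' g 1 (inv_mul_cancel g)
  exact squeeze_zero (fun _ => dist_nonneg)
    (fun x => (Real.dist_eq _ _).trans_le (hf.abs_sub_le g x)) (h.comp hg)

end IsGroupSeminorm

section Extension

variable {G : Type*}

/-- An `ℝ≥0∞`-valued seminorm is a seminorm on the subgroup where it is finite; `ExtendedBy f φ`
says that `φ` extends it. -/
def ExtendedBy (f φ : G → ℝ≥0∞) : Prop := ∀ g, f g ≠ ⊤ → φ g = f g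

instance : Std.Refl (ExtendedBy (G := G)) := ⟨fun _ _ _ => rfl⟩

theorem ExtendedBy.trans {f φ ψ : G → ℝ≥0∞} (hφ : ExtendedBy f φ) (hψ : ExtendedBy φ ψ) :
    ExtendedBy f ψ := fun g hg => (hψ g (hφ g hg ▸ hg)).trans (hφ g hg)

theorem ExtendedBy.le {f φ : G → ℝ≥0∞} (h : ExtendedBy f φ) (g : G) : φ g ≤ f g := by
  by_cases hg : f g = ⊤
  · exact hg ▸ le_top
  · exact (h g hg).le

theorem IsGroupSeminorm.exists_zpow_le [Group G] {f : G → ℝ≥0∞} (hf : IsGroupSeminorm f)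
    (x : G) : ∃ c ≠ ⊤, ∀ n : ℤ, f (x ^ n) ≠ ⊤ → f (x ^ n) ≤ n.natAbs * c := by
  let H : AddSubgroup ℤ :=
    { carrier := {n | f (x ^ n) ≠ ⊤}
      zero_mem' := by simp [hf.map_one]
      add_mem' := fun {m n} hm hn => ne_top_of_le_ne_top (ENNReal.add_ne_top.2 ⟨hm, hn⟩)
        (zpow_add x m n ▸ hf.map_mul_le _ _)
      neg_mem' := fun {n} hn => by simpa [zpow_neg, hf.map_inv] using hn }
  obtain ⟨k, hk⟩ := Int.subgroup_cyclic H
  have hkH : k ∈ H := hk ▸ AddSubgroup.subset_closure rfl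
  refine ⟨f (x ^ k), hkH, fun n hn => ?_⟩
  obtain ⟨q, rfl⟩ : k ∣ n := by
    rw [← Int.mem_zmultiples_iff, AddSubgroup.zmultiples_eq_closure, ← hk]
    exact hn
  rcases eq_or_ne k 0 with rfl | hk0
  · simp [hf.map_one]
  calc f (x ^ (k * q)) ≤ q.natAbs * f (x ^ k) := by
        simpa [zpow_mul] using hf.map_zpow_le (x ^ k) q
    _ ≤ (k * q).natAbs * f (x ^ k) := by
        gcongr
        rw [Int.natAbs_mul]
        exact Nat.le_mul_of_pos_left _ (Int.natAbs_pos.2 hk0)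

theorem isGroupSeminorm_iInf_of_isChain [Group G] {c : Set (G → ℝ≥0∞)}
    (hc : IsChain ExtendedBy c) (hne : c.Nonempty) (hsn : ∀ f ∈ c, IsGroupSeminorm f) :
    IsGroupSeminorm fun g => ⨅ f ∈ c, f g := by
  obtain ⟨f₀, hf₀⟩ := hne
  refine ⟨le_antisymm ((biInf_le _ hf₀).trans (hsn f₀ hf₀).map_one.le) zero_le,
    fun g => iInf_congr fun f => iInf_congr fun hf => (hsn f hf).map_inv g,
    fun g h => ENNReal.le_iInf_add_iInf fun f φ => ENNReal.le_iInf_add_iInf fun hf hφ => ?_⟩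
  rcases hc.total hf hφ with hfφ | hφf
  · calc ⨅ ψ ∈ c, ψ (g * h) ≤ φ (g * h) := biInf_le _ hφ
      _ ≤ φ g + φ h := (hsn φ hφ).map_mul_le g h
      _ ≤ f g + φ h := by gcongr; exact hfφ.le g
  · calc ⨅ ψ ∈ c, ψ (g * h) ≤ f (g * h) := biInf_le _ hf
      _ ≤ f g + f h := (hsn f hf).map_mul_le g h
      _ ≤ f g + φ h := by gcongr; exact hφf.le h

theorem extendedBy_iInf_of_isChain {c : Set (G → ℝ≥0∞)} (hc : IsChain ExtendedBy c)
    {f : G → ℝ≥0∞} (hf : f ∈ c) : ExtendedBy f fun g => ⨅ φ ∈ c, φ g := by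
  refine fun g hg => le_antisymm (biInf_le _ hf) (le_iInf₂ fun φ hφ => ?_)
  rcases hc.total hf hφ with hfφ | hφf
  · exact (hfφ g hg).ge
  · exact hφf.le g

variable [CommGroup G]

/-- The largest seminorm below `f` whose value at `x ^ n` is at most `n.natAbs * c`. -/
noncomputable def zpowExtension (f : G → ℝ≥0∞) (x : G) (c : ℝ≥0∞) (g : G) : ℝ≥0∞ :=
  ⨅ n : ℤ, f (x ^ n * g) + n.natAbs * c

theorem zpowExtension_le (f : G → ℝ≥0∞) (x : G) (c : ℝ≥0∞) (g : G) (n : ℤ) :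
    zpowExtension f x c g ≤ f (x ^ n * g) + n.natAbs * c :=
  iInf_le (fun n : ℤ => f (x ^ n * g) + n.natAbs * c) n

theorem zpowExtension_self_le (f : G → ℝ≥0∞) (x : G) (c : ℝ≥0∞) (hf : f 1 = 0) :
    zpowExtension f x c x ≤ c := by
  simpa [hf] using zpowExtension_le f x c x (-1)

theorem isGroupSeminorm_zpowExtension {f : G → ℝ≥0∞} (hf : IsGroupSeminorm f) (x : G)
    (c : ℝ≥0∞) : IsGroupSeminorm (zpowExtension f x c) := by
  have inv_le (g : G) : zpowExtension f x c g⁻¹ ≤ zpowExtension f x c g :=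
    le_iInf fun n => by
      have := zpowExtension_le f x c g⁻¹ (-n)
      rwa [zpow_neg, ← mul_inv, hf.map_inv, Int.natAbs_neg] at this
  refine ⟨le_antisymm ?_ zero_le, fun g => le_antisymm (inv_le g) (by simpa using inv_le g⁻¹),
    fun g h => ENNReal.le_iInf_add_iInf fun m n => ?_⟩
  · simpa [hf.map_one] using zpowExtension_le f x c 1 0
  calc zpowExtension f x c (g * h) ≤ f (x ^ m * g * (x ^ n * h)) + (m + n).natAbs * c := by
        simpa [zpow_add, mul_mul_mul_comm] using zpowExtension_le f x c (g * h) (m + n)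
    _ ≤ f (x ^ m * g) + f (x ^ n * h) + (m.natAbs + n.natAbs) * c := by
        gcongr
        · exact hf.map_mul_le _ _
        · exact_mod_cast Int.natAbs_add_le m n
    _ = f (x ^ m * g) + m.natAbs * c + (f (x ^ n * h) + n.natAbs * c) := by ring

theorem IsGroupSeminorm.extendedBy_zpowExtension {f : G → ℝ≥0∞} (hf : IsGroupSeminorm f)
    {x : G} {c : ℝ≥0∞} (hc : ∀ n : ℤ, f (x ^ n) ≠ ⊤ → f (x ^ n) ≤ n.natAbs * c) :
    ExtendedBy f (zpowExtension f x c) := by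
  refine fun g hg =>
    le_antisymm (by simpa using zpowExtension_le f x c g 0) (le_iInf fun n => ?_)
  by_cases hn : f (x ^ n * g) = ⊤
  · simp [hn]
  have hxn : f (x ^ n) ≠ ⊤ := by
    refine ne_top_of_le_ne_top (ENNReal.add_ne_top.2 ⟨hn, hg⟩) ?_
    simpa [hf.map_inv] using hf.map_mul_le (x ^ n * g) g⁻¹
  calc f g = f ((x ^ n)⁻¹ * (x ^ n * g)) := by rw [inv_mul_cancel_left]
    _ ≤ f (x ^ n) + f (x ^ n * g) := hf.map_inv (x ^ n) ▸ hf.map_mul_le _ _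
    _ ≤ f (x ^ n * g) + n.natAbs * c := by rw [add_comm]; gcongr; exact hc n hxn

theorem IsGroupSeminorm.exists_extendedBy_ne_top {f : G → ℝ≥0∞} (hf : IsGroupSeminorm f) :
    ∃ φ, IsGroupSeminorm φ ∧ ExtendedBy f φ ∧ ∀ g, φ g ≠ ⊤ := by
  let α := {φ : G → ℝ≥0∞ // IsGroupSeminorm φ ∧ ExtendedBy f φ}
  have hchain (c : Set α) (hc : IsChain (fun φ ψ : α => ExtendedBy φ.1 ψ.1) c) :
      ∃ ub : α, ∀ φ ∈ c, ExtendedBy φ.1 ub.1 := by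
    let c' := insert f (Subtype.val '' c)
    have hc' : IsChain ExtendedBy c' :=
      (hc.image_of_map_rel _ ExtendedBy Subtype.val fun _ _ h => h).insert <| by
        rintro _ ⟨φ, -, rfl⟩ -
        exact .inl φ.2.2
    have hsn : ∀ φ ∈ c', IsGroupSeminorm φ := by
      rintro φ (rfl | ⟨φ, -, rfl⟩)
      exacts [hf, φ.2.1]
    exact ⟨⟨_, isGroupSeminorm_iInf_of_isChain hc' (insert_nonempty _ _) hsn,
      extendedBy_iInf_of_isChain hc' (mem_insert _ _)⟩,
      fun φ hφ => extendedBy_iInf_of_isChain hc' (mem_insert_of_mem _ ⟨φ, hφ, rfl⟩)⟩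
  obtain ⟨⟨m, hm, hfm⟩, hmax⟩ :=
    exists_maximal_of_chains_bounded hchain fun h h' => h.trans h'
  refine ⟨m, hm, hfm, fun x hx => ?_⟩
  obtain ⟨c, hc, hxc⟩ := hm.exists_zpow_le x
  have hext := hm.extendedBy_zpowExtension hxc
  have hfin : zpowExtension m x c x ≠ ⊤ :=
    ne_top_of_le_ne_top hc (zpowExtension_self_le m x c hm.map_one)
  have hmax' := hmax ⟨_, isGroupSeminorm_zpowExtension hm x c, hfm.trans hext⟩ hext
  exact hfin ((hmax' x hfin).symm.trans hx)

end Extension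

section WordNorm

variable {G : Type*} [CommGroup G]

noncomputable def wordNorm (S : Set (G × ℝ≥0)) (g : G) : ℝ≥0∞ :=
  ⨅ s : {s : Multiset (G × ℝ≥0) // (∀ p ∈ s, p ∈ S) ∧ (s.map Prod.fst).prod = g},
    ((s.1.map Prod.snd).sum : ℝ≥0∞)

variable {S : Set (G × ℝ≥0)}

theorem wordNorm_le {s : Multiset (G × ℝ≥0)} (hs : ∀ p ∈ s, p ∈ S) :
    wordNorm S (s.map Prod.fst).prod ≤ (s.map Prod.snd).sum :=
  iInf_le_of_le ⟨s, hs, rfl⟩ le_rfl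

theorem le_wordNorm {g : G} {c : ℝ≥0∞}
    (h : ∀ s : Multiset (G × ℝ≥0), (∀ p ∈ s, p ∈ S) → (s.map Prod.fst).prod = g →
      c ≤ (s.map Prod.snd).sum) :
    c ≤ wordNorm S g :=
  le_iInf fun s => h s.1 s.2.1 s.2.2

theorem wordNorm_le_of_mem {p : G × ℝ≥0} (hp : p ∈ S) : wordNorm S p.1 ≤ p.2 := by
  simpa using wordNorm_le (s := {p}) (by simpa using hp)

theorem isGroupSeminorm_wordNorm (hS : ∀ p ∈ S, (p.1⁻¹, p.2) ∈ S) :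
    IsGroupSeminorm (wordNorm S) := by
  have inv_le (g : G) : wordNorm S g⁻¹ ≤ wordNorm S g := le_iInf fun ⟨s, hs, hg⟩ => by
    have := wordNorm_le (s := s.map fun p => (p.1⁻¹, p.2)) <| by
      simp only [Multiset.mem_map]
      rintro _ ⟨p, hp, rfl⟩
      exact hS p (hs p hp)
    simpa [Multiset.map_map, Function.comp_def, Multiset.prod_map_inv, hg] using this
  refine ⟨le_antisymm (by simpa using wordNorm_le (S := S) (s := 0) (by simp)) zero_le,
    fun g => le_antisymm (inv_le g) (by simpa using inv_le g⁻¹),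
    fun g h => ENNReal.le_iInf_add_iInf fun ⟨s, hs, hsg⟩ ⟨t, ht, hth⟩ => ?_⟩
  have := wordNorm_le (S := S) (s := s + t) fun p hp =>
    (Multiset.mem_add.1 hp).elim (hs p) (ht p)
  simpa [hsg, hth] using this

end WordNorm

theorem Set.multiset_prod_map_mem_pow {ι M : Type*} [CommMonoid M] {T : Set M}
    {s : Multiset ι} {g : ι → M} (h : ∀ i ∈ s, g i ∈ T) :
    (s.map g).prod ∈ T ^ Multiset.card s := by
  simpa using Set.multiset_prod_mem_multiset_prod s (fun _ => T) g h

section Dyadic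

variable {G : Type*} [CommGroup G] {V : ℕ → Set G}

def dyadicLetters (V : ℕ → Set G) : Set (G × ℝ≥0) :=
  {p | ∃ j, p.1 ∈ V j ∧ p.2 = 2⁻¹ ^ j}

theorem prod_mem_pow_of_sum_le_of_levels (hV1 : ∀ j, 1 ∈ V j)
    (hV : ∀ j, V (j + 1) * V (j + 1) ⊆ V j) (D : ℕ) :
    ∀ (J n : ℕ) (s : Multiset (G × ℝ≥0)),
      (∀ p ∈ s, ∃ j, J ≤ j ∧ j < J + D ∧ p.1 ∈ V j ∧ p.2 = 2⁻¹ ^ j) →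
      (s.map Prod.snd).sum ≤ n * 2⁻¹ ^ J → (s.map Prod.fst).prod ∈ V J ^ n := by
  induction D with
  | zero =>
    intro J n s hs _
    obtain rfl : s = 0 := Multiset.eq_zero_of_forall_notMem fun p hp => by
      obtain ⟨j, _, _, -⟩ := hs p hp
      omega
    simpa using Set.pow_mem_pow (hV1 J)
  | succ D ih =>
    intro J n s hs hcost
    classical
    -- The `k` letters of level `J` give `V J ^ k`; the others have level `> J` and cost at most
    -- `(n - k) * 2⁻¹ ^ J`, so they give `V (J + 1) ^ (2 * (n - k)) ⊆ V J ^ (n - k)`.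
    set s₀ := s.filter fun p => p.2 = 2⁻¹ ^ J
    set s₁ := s.filter fun p => ¬p.2 = 2⁻¹ ^ J
    have hs₀ : ∀ p ∈ s₀, p.1 ∈ V J ∧ p.2 = 2⁻¹ ^ J := by
      intro p hp
      obtain ⟨hp, hpJ⟩ := Multiset.mem_filter.1 hp
      obtain ⟨j, -, -, hpj, hw⟩ := hs p hp
      obtain rfl : j = J :=
        pow_right_injective₀ (by norm_num) (by norm_num) (hw.symm.trans hpJ)
      exact ⟨hpj, hpJ⟩
    have hs₁ : ∀ p ∈ s₁, ∃ j, J + 1 ≤ j ∧ j < J + 1 + D ∧ p.1 ∈ V j ∧ p.2 = 2⁻¹ ^ j := by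
      intro p hp
      obtain ⟨hp, hpJ⟩ := Multiset.mem_filter.1 hp
      obtain ⟨j, hJj, hjD, hpj, hw⟩ := hs p hp
      have : j ≠ J := by rintro rfl; exact hpJ hw
      exact ⟨j, by omega, by omega, hpj, hw⟩
    have hsplit : s = s₀ + s₁ := (Multiset.filter_add_not _ s).symm
    have hcost₀ : (s₀.map Prod.snd).sum = Multiset.card s₀ * 2⁻¹ ^ J := by
      rw [Multiset.map_congr rfl fun p hp => (hs₀ p hp).2]
      simp
    rw [hsplit, Multiset.map_add, Multiset.sum_add, hcost₀] at hcost
    obtain ⟨m, rfl⟩ : ∃ m, n = Multiset.card s₀ + m := by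
      refine Nat.exists_eq_add_of_le ?_
      exact_mod_cast le_of_mul_le_mul_right (le_self_add.trans hcost) (by positivity)
    have hcost₁ : (s₁.map Prod.snd).sum ≤ ↑(2 * m) * 2⁻¹ ^ (J + 1) := by
      have hexp : ((Multiset.card s₀ + m : ℕ) : ℝ≥0) * 2⁻¹ ^ J
          = Multiset.card s₀ * 2⁻¹ ^ J + ↑(2 * m) * 2⁻¹ ^ (J + 1) := by
        push_cast
        rw [pow_succ]
        field_simp
      exact le_of_add_le_add_left (hcost.trans_eq hexp)
    rw [hsplit, Multiset.map_add, Multiset.prod_add, pow_add]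
    refine Set.mul_mem_mul (Set.multiset_prod_map_mem_pow fun p hp => (hs₀ p hp).1) ?_
    have h₁ := ih (J + 1) (2 * m) s₁ hs₁ hcost₁
    rw [pow_mul, sq] at h₁
    exact Set.pow_subset_pow_left (hV J) h₁

theorem prod_mem_pow_of_sum_le (hV1 : ∀ j, 1 ∈ V j) (hV : ∀ j, V (j + 1) * V (j + 1) ⊆ V j)
    {s : Multiset (G × ℝ≥0)} (hs : ∀ p ∈ s, p ∈ dyadicLetters V) {n : ℕ}
    (hcost : (s.map Prod.snd).sum ≤ n) : (s.map Prod.fst).prod ∈ V 0 ^ n := by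
  classical
  have hD : ∀ᶠ D in atTop, ∀ p ∈ s.toFinset, ∃ j < D, p.1 ∈ V j ∧ p.2 = 2⁻¹ ^ j :=
    (s.toFinset.eventually_all).2 fun p hp => by
      obtain ⟨j, hj⟩ := hs p (Multiset.mem_toFinset.1 hp)
      exact (eventually_gt_atTop j).mono fun D hD => ⟨j, hD, hj⟩
  obtain ⟨D, hD⟩ := hD.exists
  refine prod_mem_pow_of_sum_le_of_levels hV1 hV D 0 n s (fun p hp => ?_)
    (by simpa using hcost)
  obtain ⟨j, hjD, hj⟩ := hD p (Multiset.mem_toFinset.2 hp)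
  exact ⟨j, Nat.zero_le j, by omega, hj⟩

end Dyadic

theorem exists_seq_nhds_one_inv_eq_mul_subset {G : Type*} [Group G] [TopologicalSpace G]
    [IsTopologicalGroup G] {U : Set G} (hU : U ∈ 𝓝 1) :
    ∃ V : ℕ → Set G, (∀ j, V j ∈ 𝓝 1) ∧ (∀ j, (V j)⁻¹ = V j) ∧
      (∀ j, V (j + 1) * V (j + 1) ⊆ V j) ∧ V 0 ⊆ U := by
  choose! W hW _ hWinv hWmul using fun U (hU : U ∈ 𝓝 (1 : G)) =>
    exists_closed_nhds_one_inv_eq_mul_subset hU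
  have hiter : ∀ j, W^[j] U ∈ 𝓝 1 := by
    intro j
    induction j with
    | zero => exact hU
    | succ j ih => rw [Function.iterate_succ_apply']; exact hW _ ih
  refine ⟨fun j => W (W^[j] U), fun j => hW _ (hiter j), fun j => hWinv _ (hiter j),
    fun j => ?_, (subset_mul_left _ (mem_of_mem_nhds (hW U hU))).trans (hWmul U hU)⟩
  simpa only [Function.iterate_succ_apply'] using hWmul _ (hiter (j + 1))

theorem IsCompact.pow {M : Type*} [Monoid M] [TopologicalSpace M] [ContinuousMul M]
    {K : Set M} (hK : IsCompact K) : ∀ n : ℕ, IsCompact (K ^ n)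
  | 0 => by simp
  | n + 1 => by rw [pow_succ]; exact (hK.pow n).mul hK

theorem exists_seq_forall_notMem_pow_mul_pow {G : Type*} [Group G] [TopologicalSpace G]
    [ContinuousMul G] {A K : Set G} (hA : ∀ C, IsCompact C → ¬A ⊆ C) (hK : IsCompact K) :
    ∃ (a : ℕ → G) (T : ℕ → Set G), (∀ n, a n ∈ A) ∧ (∀ n, 1 ∈ T n) ∧
      (∀ m n, m < n → a m ∈ T n ∧ (a m)⁻¹ ∈ T n) ∧ ∀ n, a n ∉ T n ^ n * K ^ n := by
  classical
  have hcpt (F : Finset G) (n : ℕ) : IsCompact ((F : Set G) ^ n * K ^ n) :=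
    (F.finite_toSet.isCompact.pow n).mul (hK.pow n)
  choose next hnextA hnext using fun (F : Finset G) (n : ℕ) =>
    not_subset.1 (hA _ (hcpt F n))
  obtain ⟨T, hT0, hT⟩ : ∃ T : ℕ → Finset G, T 0 = {1} ∧
      ∀ n, T (n + 1) = T n ∪ {next (T n) n, (next (T n) n)⁻¹} :=
    ⟨fun n => Nat.rec {1} (fun n F => F ∪ {next F n, (next F n)⁻¹}) n, rfl, fun _ => rfl⟩
  have hTmono : Monotone T := monotone_nat_of_le_succ fun n => hT n ▸ Finset.subset_union_left
  refine ⟨fun n => next (T n) n, fun n => T n, fun n => hnextA _ _,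
    fun n => hTmono (Nat.zero_le n) (by simp [hT0]), fun m n hmn => ?_, fun n => hnext (T n) n⟩
  have hmn := hTmono (Nat.succ_le_of_lt hmn)
  exact ⟨hmn (by simp [hT]), hmn (by simp [hT])⟩

section Escape

variable {G : Type*} [CommGroup G]

def seqLetters (a : ℕ → G) : Set (G × ℝ≥0) :=
  {p | ∃ m, (p.1 = a m ∨ p.1 = (a m)⁻¹) ∧ p.2 = m + 1}

theorem inv_mem_dyadicLetters_union_seqLetters {V : ℕ → Set G} (hV : ∀ j, (V j)⁻¹ = V j)
    (a : ℕ → G) {p : G × ℝ≥0} (hp : p ∈ dyadicLetters V ∪ seqLetters a) :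
    (p.1⁻¹, p.2) ∈ dyadicLetters V ∪ seqLetters a := by
  rcases hp with ⟨j, hpV, hw⟩ | ⟨m, hpa | hpa, hw⟩
  · exact .inl ⟨j, by rwa [← hV j, Set.inv_mem_inv], hw⟩
  · exact .inr ⟨m, .inr (by rw [hpa]), hw⟩
  · exact .inr ⟨m, .inl (by rw [hpa, inv_inv]), hw⟩

theorem natCast_le_wordNorm {V : ℕ → Set G} (hV1 : ∀ j, 1 ∈ V j)
    (hV : ∀ j, V (j + 1) * V (j + 1) ⊆ V j) {a : ℕ → G} {T : Set G} {N : ℕ} (hT1 : 1 ∈ T)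
    (hTa : ∀ m < N, a m ∈ T ∧ (a m)⁻¹ ∈ T) {g : G} (hg : g ∉ T ^ N * V 0 ^ N) :
    (N : ℝ≥0∞) ≤ wordNorm (dyadicLetters V ∪ seqLetters a) g := by
  refine le_wordNorm fun s hs hsg => ?_
  by_contra! hlt
  have hlt : (s.map Prod.snd).sum < N := by exact_mod_cast hlt
  classical
  set sa := s.filter (· ∉ dyadicLetters V)
  set sV := s.filter (· ∈ dyadicLetters V)
  have hsplit : s = sa + sV := (Multiset.filter_add_not _ s).symm.trans (add_comm _ _)
  rw [hsplit, Multiset.map_add, Multiset.sum_add] at hlt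
  have hsa (p) (hp : p ∈ sa) : 1 ≤ p.2 ∧ p.1 ∈ T := by
    obtain ⟨hps, hpV⟩ := Multiset.mem_filter.1 hp
    obtain ⟨m, hpa, hw⟩ := (hs p hps).resolve_left hpV
    have hmN : (m : ℝ≥0) + 1 < N := hw ▸
      ((Multiset.le_sum_of_mem (Multiset.mem_map_of_mem _ hp)).trans le_self_add).trans_lt hlt
    have hm : m < N := by exact_mod_cast (lt_add_one (m : ℝ≥0)).trans hmN
    refine ⟨hw ▸ le_add_self, ?_⟩
    rcases hpa with hpa | hpa <;> rw [hpa]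
    exacts [(hTa m hm).1, (hTa m hm).2]
  have hcard : Multiset.card sa ≤ N := by
    have h1 : ∀ w ∈ sa.map Prod.snd, 1 ≤ w := by
      simp only [Multiset.mem_map]
      rintro _ ⟨p, hp, rfl⟩
      exact (hsa p hp).1
    have h := ((Multiset.card_nsmul_le_sum h1).trans le_self_add).trans hlt.le
    rw [Multiset.card_map, nsmul_one] at h
    exact_mod_cast h
  refine hg (hsg ▸ hsplit ▸ ?_)
  rw [Multiset.map_add, Multiset.prod_add]
  refine Set.mul_mem_mul (Set.pow_subset_pow_right hT1 hcard
    (Set.multiset_prod_map_mem_pow fun p hp => (hsa p hp).2)) ?_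
  exact prod_mem_pow_of_sum_le hV1 hV (fun p hp => (Multiset.mem_filter.1 hp).2)
    (le_add_self.trans hlt.le)

end Escape

theorem exists_continuous_isGroupSeminorm_not_bddAbove {G : Type*} [CommGroup G]
    [TopologicalSpace G] [IsTopologicalGroup G] [LocallyCompactSpace G] {A : Set G}
    (hA : ¬IsCompact (closure A)) :
    ∃ f : G → ℝ, Continuous f ∧ IsGroupSeminorm f ∧ ¬BddAbove (f '' A) := by
  obtain ⟨K, hK, hK1⟩ := exists_compact_mem_nhds (1 : G)
  obtain ⟨V, hV, hVinv, hVmul, hVK⟩ := exists_seq_nhds_one_inv_eq_mul_subset hK1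
  have hV1 j : (1 : G) ∈ V j := mem_of_mem_nhds (hV j)
  obtain ⟨a, T, haA, hT1, hTa, haT⟩ := exists_seq_forall_notMem_pow_mul_pow
    (fun C hC hAC => hA (hC.closure.of_isClosed_subset isClosed_closure (closure_mono hAC))) hK
  obtain ⟨φ, hφ, hwφ, hφtop⟩ := (isGroupSeminorm_wordNorm fun _ =>
    inv_mem_dyadicLetters_union_seqLetters hVinv a).exists_extendedBy_ne_top
  have hφV j : ∀ v ∈ V j, (φ v).toReal ≤ 2⁻¹ ^ j := fun v hv => by
    have := (hwφ.le v).trans (wordNorm_le_of_mem (p := (v, 2⁻¹ ^ j)) (.inl ⟨j, hv, rfl⟩))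
    simpa using ENNReal.toReal_mono ENNReal.coe_ne_top this
  have hφa (N : ℕ) : (N : ℝ) ≤ (φ (a N)).toReal := by
    have hup := ne_top_of_le_ne_top ENNReal.coe_ne_top
      (wordNorm_le_of_mem (S := dyadicLetters V ∪ seqLetters a) (p := (a N, N + 1))
        (Or.inr ⟨N, .inl rfl, rfl⟩))
    have hlow := natCast_le_wordNorm hV1 hVmul (hT1 N) (fun m hm => hTa m N hm)
      fun h => haT N (Set.mul_subset_mul_left (Set.pow_subset_pow_left hVK) h)
    rw [hwφ _ hup]
    simpa using ENNReal.toReal_mono hup hlow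
  refine ⟨fun g => (φ g).toReal, (hφ.toReal hφtop).continuous_of_tendsto_one ?_,
    hφ.toReal hφtop, ?_⟩
  · refine tendsto_order.2 ⟨fun ε hε => .of_forall fun g => hε.trans_le ENNReal.toReal_nonneg,
      fun ε hε => ?_⟩
    obtain ⟨j, hj⟩ := exists_pow_lt_of_lt_one hε (by norm_num : (2⁻¹ : ℝ) < 1)
    filter_upwards [hV j] with v hv using (hφV j v hv).trans_lt hj
  · rintro ⟨C, hC⟩
    obtain ⟨N, hN⟩ := exists_nat_gt C
    exact (hN.trans_le (hφa N)).not_ge (hC ⟨a N, haA N, rfl⟩)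

theorem relativelyCompact_iff_coarselyBounded_general
    {G : Type*} [CommGroup G] [TopologicalSpace G] [IsTopologicalGroup G]
    [LocallyCompactSpace G] (A : Set G) :
    IsCompact (closure A) ↔ CoarselyBounded A := by
  refine ⟨fun hA f hf _ _ _ => (hA.image hf).isBounded.subset (image_mono subset_closure),
    fun hA => by_contra fun hA' => ?_⟩
  obtain ⟨f, hf, hfs, hfA⟩ := exists_continuous_isGroupSeminorm_not_bddAbove hA'
  exact hfA (hA f hf hfs.map_one hfs.map_inv hfs.map_mul_le).bddAbove

/-- In a locally compact Hausdorff abelian topological group, a subset is relatively compact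
if and only if it is coarsely bounded. -/
theorem relativelyCompact_iff_coarselyBounded
    {G : Type*} [CommGroup G] [TopologicalSpace G] [IsTopologicalGroup G]
    [LocallyCompactSpace G] [T2Space G] (A : Set G) :
    IsCompact (closure A) ↔ CoarselyBounded A :=
  relativelyCompact_iff_coarselyBounded_general A
end

section
/- Let X be an infinite-dimensional real Banach space and let (G_i)_{i ∈ I} be a family of locally compact Hausdorff topological groups. Then there is no group homomorphism ι from the additive group of X to the product group Π_{i ∈ I} G_i (with the product topology) that is a topological embedding, i.e., a homeomorphism onto its image. -/
/-!
Restricting the embedding to finitely many coordinates gives a continuous homomorphism `f` from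
`X` to a locally compact group `H` and a neighbourhood `U` of `1` with `f⁻¹ U ⊆ ball 0 r`.
Since `f (n • x) = f x ^ n`, the image of every bounded set lies in a compact set `(· ^ n) '' K`.
An infinite-dimensional `X` contains a bounded sequence whose terms are pairwise at distance
`≥ r`; a cluster point of its image in the compact set yields two terms `x m ≠ x n` with
`f (x m) / f (x n) = f (x m - x n) ∈ U`, i.e. `‖x m - x n‖ < r`, a contradiction.
-/

open Filter Metric Set Topology

section MapAdd

variable {X H : Type*} [AddGroup X] [Group H] {f : X → H}

lemma map_zero_eq_one_of_map_add (hf : ∀ x y, f (x + y) = f x * f y) : f 0 = 1 :=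
  left_eq_mul.mp (by rw [← hf, add_zero] : f 0 = f 0 * f 0)

lemma map_nsmul_eq_pow_of_map_add (hf : ∀ x y, f (x + y) = f x * f y) (n : ℕ) (x : X) :
    f (n • x) = f x ^ n := by
  induction n with
  | zero => simpa using map_zero_eq_one_of_map_add hf
  | succ n ih => rw [succ_nsmul, hf, ih, pow_succ]

lemma map_sub_eq_div_of_map_add (hf : ∀ x y, f (x + y) = f x * f y) (x y : X) :
    f (x - y) = f x / f y := by
  rw [eq_div_iff_mul_eq', ← hf, sub_add_cancel]

end MapAdd

lemma exists_finset_restrict_preimage_subset_of_mem_nhds {I : Type*} {G : I → Type*}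
    [∀ i, TopologicalSpace (G i)] {x : ∀ i, G i} {W : Set (∀ i, G i)} (hW : W ∈ 𝓝 x) :
    ∃ J : Finset I, ∃ U ∈ 𝓝 (J.restrict x), J.restrict ⁻¹' U ⊆ W := by
  rw [nhds_pi, mem_pi'] at hW
  obtain ⟨J, t, ht, hJt⟩ := hW
  exact ⟨J, univ.pi fun j : J ↦ t j, set_pi_mem_nhds finite_univ fun j _ ↦ ht j,
    fun y hy ↦ hJt fun i hi ↦ hy ⟨i, hi⟩ (mem_univ _)⟩

lemma IsCompact.exists_ne_div_mem {H : Type*} [Group H] [TopologicalSpace H]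
    [IsTopologicalGroup H] {K : Set H} (hK : IsCompact K) {u : ℕ → H} (hu : ∀ n, u n ∈ K)
    {U : Set H} (hU : U ∈ 𝓝 1) : ∃ m n, m ≠ n ∧ u m / u n ∈ U := by
  obtain ⟨p, -, hp⟩ := hK.exists_mapClusterPt (f := atTop) (tendsto_principal.2 (.of_forall hu))
  have hpp : ∀ᶠ q in 𝓝 p ×ˢ 𝓝 p, q.1 / q.2 ∈ U := by
    rw [← nhds_prod_eq]
    exact ContinuousAt.preimage_mem_nhds (by fun_prop) (by simpa using hU)
  obtain ⟨W, hW, hWU⟩ := eventually_prod_self_iff'.mp hpp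
  obtain ⟨m, hm, n, hn, hmn⟩ := (Nat.frequently_atTop_iff_infinite.mp (hp.frequently hW)).nontrivial
  exact ⟨m, n, hmn, hWU _ hm _ hn⟩

section NormedSpace

variable {X H : Type*} [Group H] [TopologicalSpace H] [LocallyCompactSpace H] {f : X → H}

lemma exists_isCompact_mapsTo_of_isBounded [SeminormedAddCommGroup X] [NormedSpace ℝ X]
    [ContinuousMul H] (hf : ∀ x y, f (x + y) = f x * f y) (hfc : Continuous f) {s : Set X}
    (hs : Bornology.IsBounded s) : ∃ K, IsCompact K ∧ MapsTo f s K := by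
  obtain ⟨K, hK, hK1⟩ := exists_compact_mem_nhds (1 : H)
  have hfK : f ⁻¹' K ∈ 𝓝 0 :=
    hfc.continuousAt.preimage_mem_nhds (by rwa [map_zero_eq_one_of_map_add hf])
  obtain ⟨δ, hδ, hδK⟩ := Metric.mem_nhds_iff.mp hfK
  obtain ⟨R, hR⟩ := hs.subset_closedBall 0
  obtain ⟨n, hn⟩ := exists_nat_gt (R / δ)
  refine ⟨(· ^ n) '' K, hK.image (continuous_pow n), fun x hx ↦ ?_⟩
  have hxR : ‖x‖ ≤ R := mem_closedBall_zero_iff.mp (hR hx)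
  have hn0 : (0 : ℝ) < n := (div_nonneg ((norm_nonneg x).trans hxR) hδ.le).trans_lt hn
  refine ⟨f ((n : ℝ)⁻¹ • x), hδK ?_, ?_⟩
  · rw [mem_ball_zero_iff, norm_smul, norm_inv, Real.norm_natCast, inv_mul_lt_iff₀ hn0]
    linarith [(div_lt_iff₀ hδ).mp hn]
  · dsimp only
    rw [← map_nsmul_eq_pow_of_map_add hf, ← Nat.cast_smul_eq_nsmul ℝ, smul_inv_smul₀ hn0.ne']

theorem FiniteDimensional.of_isBounded_preimage_nhds_one [NormedAddCommGroup X]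
    [NormedSpace ℝ X] [IsTopologicalGroup H] (hf : ∀ x y, f (x + y) = f x * f y)
    (hfc : Continuous f) {U : Set H} (hU : U ∈ 𝓝 1) (hUb : Bornology.IsBounded (f ⁻¹' U)) :
    FiniteDimensional ℝ X := by
  by_contra hX
  obtain ⟨r, hr, hUr⟩ := hUb.subset_ball_lt 0 0
  obtain ⟨R, x, -, hxR, hx⟩ := exists_seq_norm_le_one_le_norm_sub hX
  have hbdd : Bornology.IsBounded (range (r • x)) := by
    refine (isBounded_closedBall (x := 0) (r := r * R)).subset (range_subset_iff.2 fun n ↦ ?_)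
    rw [mem_closedBall_zero_iff, Pi.smul_apply, norm_smul, Real.norm_of_nonneg hr.le]
    exact mul_le_mul_of_nonneg_left (hxR n) hr.le
  obtain ⟨K, hK, hfK⟩ := exists_isCompact_mapsTo_of_isBounded hf hfc hbdd
  obtain ⟨m, n, hmn, hmnU⟩ := hK.exists_ne_div_mem (fun n ↦ hfK (mem_range_self n)) hU
  have hclose : ‖r • x m - r • x n‖ < r := by
    rw [← mem_ball_zero_iff]
    exact hUr (by rwa [mem_preimage, map_sub_eq_div_of_map_add hf])
  rw [← smul_sub, norm_smul, Real.norm_of_nonneg hr.le] at hclose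
  nlinarith [hx hmn]

end NormedSpace

theorem no_embedding_of_banach_into_product_of_locallyCompact_groups_general
    {X : Type*} [NormedAddCommGroup X] [NormedSpace ℝ X]
    (hX : ¬ FiniteDimensional ℝ X)
    {I : Type*} (G : I → Type*) [∀ i, Group (G i)] [∀ i, TopologicalSpace (G i)]
    [∀ i, IsTopologicalGroup (G i)] [∀ i, LocallyCompactSpace (G i)] :
    ¬ ∃ ι : X → (∀ i, G i),
        (∀ x y : X, ι (x + y) = ι x * ι y) ∧ Topology.IsEmbedding ι := by
  rintro ⟨ι, hι, hemb⟩
  obtain ⟨W, hW, hWball⟩ : ∃ W ∈ 𝓝 1, ι ⁻¹' W ⊆ ball 0 1 := by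
    rw [← map_zero_eq_one_of_map_add hι, ← mem_comap, ← hemb.isInducing.nhds_eq_comap]
    exact ball_mem_nhds 0 one_pos
  obtain ⟨J, U, hU, hUW⟩ := exists_finset_restrict_preimage_subset_of_mem_nhds hW
  exact hX <| FiniteDimensional.of_isBounded_preimage_nhds_one (f := J.restrict ∘ ι)
    (fun x y ↦ funext fun j ↦ congrFun (hι x y) j) ((Finset.continuous_restrict J).comp
    hemb.continuous) hU (isBounded_ball.subset fun x hx ↦ hWball (hUW hx))

/-- An infinite-dimensional real Banach space cannot be embedded, as a topological group,
into any product of locally compact Hausdorff topological groups. -/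
theorem no_embedding_of_banach_into_product_of_locallyCompact_groups
    {X : Type*} [NormedAddCommGroup X] [NormedSpace ℝ X] [CompleteSpace X]
    (hX : ¬ FiniteDimensional ℝ X)
    {I : Type*} (G : I → Type*) [∀ i, Group (G i)] [∀ i, TopologicalSpace (G i)]
    [∀ i, IsTopologicalGroup (G i)] [∀ i, LocallyCompactSpace (G i)] [∀ i, T2Space (G i)] :
    ¬ ∃ ι : X → (∀ i, G i),
        (∀ x y : X, ι (x + y) = ι x * ι y) ∧ Topology.IsEmbedding ι :=
  no_embedding_of_banach_into_product_of_locallyCompact_groups_general hX G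
end

section
/- Let (G_i)_{i ∈ I} be a family of topological groups such that, for each i, every coarsely bounded subset of G_i is relatively compact. Then in the product group Π_{i ∈ I} G_i (with the product topology) every coarsely bounded subset is relatively compact. -/
theorem CoarselyBounded.image_monoidHom {G H : Type*} [Group G] [TopologicalSpace G] [Group H]
    [TopologicalSpace H] {A : Set G} (hA : CoarselyBounded A) (φ : G →* H) (hφ : Continuous φ) :
    CoarselyBounded (φ '' A) := by
  intro f hf h1 hinv hmul
  rw [Set.image_image]
  exact hA (f ∘ φ) (hf.comp hφ) (by simpa using h1) (fun g => by simpa using hinv (φ g))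
    (fun g h => by simpa using hmul (φ g) (φ h))

theorem closure_subset_pi_closure_image_eval {ι : Type*} {X : ι → Type*}
    [∀ i, TopologicalSpace (X i)] (A : Set (∀ i, X i)) :
    closure A ⊆ Set.univ.pi fun i => closure (Function.eval i '' A) :=
  closure_minimal (fun _ hx _ _ => subset_closure (Set.mem_image_of_mem _ hx))
    (isClosed_set_pi fun _ _ => isClosed_closure)

theorem pi_coarselyBounded_relativelyCompact_general
    {I : Type*} (G : I → Type*) [∀ i, Group (G i)] [∀ i, TopologicalSpace (G i)]
    (hG : ∀ i, ∀ A : Set (G i), CoarselyBounded A → IsCompact (closure A))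
    (A : Set (∀ i, G i)) (hA : CoarselyBounded A) : IsCompact (closure A) := by
  have hK : IsCompact (Set.univ.pi fun i => closure (Function.eval i '' A)) :=
    isCompact_univ_pi fun i =>
      hG i _ (hA.image_monoidHom (Pi.evalMonoidHom G i) (continuous_apply i))
  exact hK.of_isClosed_subset isClosed_closure (closure_subset_pi_closure_image_eval A)

/-- If in each topological group `G i` every coarsely bounded subset is relatively compact,
then the same holds in the product group `Π i, G i` with the product topology. -/
theorem pi_coarselyBounded_relativelyCompact
    {I : Type*} (G : I → Type*) [∀ i, Group (G i)] [∀ i, TopologicalSpace (G i)]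
    [∀ i, IsTopologicalGroup (G i)]
    (hG : ∀ i, ∀ A : Set (G i), CoarselyBounded A → IsCompact (closure A))
    (A : Set (∀ i, G i)) (hA : CoarselyBounded A) : IsCompact (closure A) :=
  pi_coarselyBounded_relativelyCompact_general G hG A hA
end

section
/- Let G be a paracompact Hausdorff topological group and let A ⊆ G. Then A is relatively compact if and only if f(A) is a bounded subset of ℝ for every continuous function f : G → ℝ. -/
/-!
If `closure A` is not compact, an open cover of it without finite subcover has a locally finite
precise refinement, infinitely many of whose members meet `closure A`. Summing `n * φₙ` over bump
functions `φₙ` supported in the `n`-th of them gives a continuous function that is unbounded on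
`closure A`, hence on `A`.
-/

open Set Function

section

variable {X : Type*} [TopologicalSpace X]

theorem IsClosed.exists_locallyFinite_nat_of_not_isCompact [ParacompactSpace X] {K : Set X}
    (hK : IsClosed K) (hKc : ¬IsCompact K) :
    ∃ V : ℕ → Set X, (∀ n, IsOpen (V n)) ∧ LocallyFinite V ∧ ∀ n, (V n ∩ K).Nonempty := by
  rw [isCompact_iff_finite_subcover] at hKc
  push Not at hKc
  obtain ⟨ι, U, hUo, hKU, hfin⟩ := hKc
  obtain ⟨v, hvo, hKv, hvlf, hvU⟩ := precise_refinement_set hK U hUo hKU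
  have hS : {i | (v i ∩ K).Nonempty}.Infinite := by
    intro hS
    refine hfin hS.toFinset fun x hx => ?_
    obtain ⟨i, hi⟩ := mem_iUnion.1 (hKv hx)
    exact mem_iUnion₂.2 ⟨i, hS.mem_toFinset.2 ⟨x, hi, hx⟩, hvU i hi⟩
  let e := hS.natEmbedding
  exact ⟨fun n => v (e n), fun n => hvo _,
    hvlf.comp_injective (Subtype.val_injective.comp e.injective), fun n => (e n).2⟩

theorem CompletelyRegularSpace.exists_nonneg_support_subset_eq_one [CompletelyRegularSpace X]
    {U : Set X} (hU : IsOpen U) {x : X} (hx : x ∈ U) :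
    ∃ φ : X → ℝ, Continuous φ ∧ (∀ y, 0 ≤ φ y) ∧ support φ ⊆ U ∧ φ x = 1 := by
  obtain ⟨f, hfc, hfx, hfU⟩ := CompletelyRegularSpace.completely_regular_isOpen x U hU hx
  refine ⟨fun y => 1 - f y, continuous_const.sub (continuous_subtype_val.comp hfc),
    fun y => sub_nonneg.2 (f y).2.2, fun y hy => ?_, by simp [hfx]⟩
  by_contra hyU
  exact hy (by simp [hfU hyU])

theorem LocallyFinite.exists_continuous_nat_le [CompletelyRegularSpace X] {V : ℕ → Set X}
    (hV : LocallyFinite V) (hVo : ∀ n, IsOpen (V n)) {x : ℕ → X} (hx : ∀ n, x n ∈ V n) :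
    ∃ f : X → ℝ, Continuous f ∧ ∀ n : ℕ, (n : ℝ) ≤ f (x n) := by
  choose φ hφc hφ0 hφV hφx using fun n =>
    CompletelyRegularSpace.exists_nonneg_support_subset_eq_one (hVo n) (hx n)
  have hlf : LocallyFinite fun n : ℕ => support fun y => (n : ℝ) * φ n y :=
    hV.subset fun n => (support_mul_subset_right _ _).trans (hφV n)
  refine ⟨fun y => ∑ᶠ n : ℕ, (n : ℝ) * φ n y,
    continuous_finsum (fun n => continuous_const.mul (hφc n)) hlf, fun n => ?_⟩
  have := single_le_finsum n (hlf.point_finite (x n))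
    (fun k => mul_nonneg (Nat.cast_nonneg k) (hφ0 k (x n)))
  simpa [hφx n] using this

theorem IsClosed.exists_continuous_not_isBounded_image_of_not_isCompact [ParacompactSpace X]
    [CompletelyRegularSpace X] {K : Set X} (hK : IsClosed K) (hKc : ¬IsCompact K) :
    ∃ f : X → ℝ, Continuous f ∧ ¬Bornology.IsBounded (f '' K) := by
  obtain ⟨V, hVo, hVlf, hVK⟩ := hK.exists_locallyFinite_nat_of_not_isCompact hKc
  choose x hxV hxK using hVK
  obtain ⟨f, hfc, hfx⟩ := hVlf.exists_continuous_nat_le hVo hxV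
  refine ⟨f, hfc, fun hb => ?_⟩
  obtain ⟨C, hC⟩ := hb.exists_norm_le
  obtain ⟨n, hn⟩ := exists_nat_gt C
  have hfxC : f (x n) ≤ C := (le_abs_self _).trans (hC _ (mem_image_of_mem f (hxK n)))
  linarith [hfx n]

end

theorem relativelyCompact_iff_bounded_image_under_continuous_functions_general
    {G : Type*} [TopologicalSpace G]
    [ParacompactSpace G] [T2Space G] (A : Set G) :
    IsCompact (closure A) ↔
      ∀ f : G → ℝ, Continuous f → Bornology.IsBounded (f '' A) := by
  refine ⟨fun hA f hf => (hA.image hf).isBounded.subset (image_mono subset_closure),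
    fun hb => ?_⟩
  by_contra hA
  obtain ⟨f, hf, hfA⟩ := isClosed_closure.exists_continuous_not_isBounded_image_of_not_isCompact hA
  exact hfA ((hb f hf).closure.subset (image_closure_subset_closure_image hf))

/-- In a paracompact Hausdorff topological group, a subset `A` is relatively compact if and
only if every continuous real-valued function on `G` maps `A` onto a bounded subset of `ℝ`. -/
theorem relativelyCompact_iff_bounded_image_under_continuous_functions
    {G : Type*} [Group G] [TopologicalSpace G] [IsTopologicalGroup G]
    [ParacompactSpace G] [T2Space G] (A : Set G) :
    IsCompact (closure A) ↔
      ∀ f : G → ℝ, Continuous f → Bornology.IsBounded (f '' A) :=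
  relativelyCompact_iff_bounded_image_under_continuous_functions_general A
end

section
/- Let G be a σ-compact, locally compact, Hausdorff topological group and let A ⊆ G. Then A is relatively compact if and only if for every group H equipped with a left-invariant metric d and every continuous group homomorphism f : G → H (H carrying the metric topology), the image f(A) is d-bounded. -/
/-!
A continuous homomorphism maps the compact set `closure A` to a compact, hence bounded, set.

Conversely, following Kakutani–Kodaira, one builds symmetric neighbourhoods `W n` of `1`,
`n ∈ ℤ`, with `W n * W n * W n ⊆ W (n + 1)`: for `n ≥ 0` they are compact and exhaust `G`
(σ-compactness), for `n < 0` they shrink so fast that conjugation by `W k` maps `W (-k-1)` into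
`W (-k)`, which makes `N = ⋂ n, W n` a normal subgroup. The length `ρ g = inf {2 ^ n | g ∈ W n}`
satisfies `ρ (a * b * c) ≤ 2 * max (ρ a) (ρ b) (ρ c)`, so Frink's chain construction
(`PseudoMetricSpace.ofPreNNDist`) gives a left-invariant metric on `G ⧸ N` comparable to
`ρ (x⁻¹ * y)`. The projection is continuous, and a set with bounded image lies in a translate of
some compact `W n`. Finally `G ⧸ N` is a σ-compact metric space, hence separable, so it embeds
in `ℓ^∞` and has a copy in `Type`.
-/

open Set Filter Topology Pointwise
open scoped NNReal

theorem NNReal.exists_two_zpow_lt {ε : ℝ≥0} (hε : 0 < ε) : ∃ n : ℤ, (2 : ℝ≥0) ^ n < ε := by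
  obtain ⟨k, hk⟩ := NNReal.exists_pow_lt_of_lt_one hε (two_inv_lt_one (α := ℝ≥0))
  exact ⟨-k, by rwa [zpow_neg, zpow_natCast, ← inv_pow]⟩

theorem PseudoMetricSpace.dist_ofPreNNDist_map_le {X : Type*} (d : X → X → ℝ≥0)
    (dist_self : ∀ x, d x x = 0) (dist_comm : ∀ x y, d x y = d y x) {φ : X → X}
    (hφ : ∀ x y, d (φ x) (φ y) = d x y) (x y : X) :
    @dist X (PseudoMetricSpace.ofPreNNDist d dist_self dist_comm).toDist (φ x) (φ y) ≤
      @dist X (PseudoMetricSpace.ofPreNNDist d dist_self dist_comm).toDist x y := by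
  rw [dist_ofPreNNDist, dist_ofPreNNDist, NNReal.coe_le_coe]
  refine le_ciInf fun l => ciInf_le_of_le (OrderBot.bddBelow _) (l.map φ) ?_
  rw [← List.map_cons, ← List.map_singleton (f := φ), ← List.map_append, List.zipWith_map]
  simp only [hφ, le_refl]

theorem small_of_sigmaCompact_of_continuous_surjective {X Y : Type*} [TopologicalSpace X]
    [SigmaCompactSpace X] [MetricSpace Y] {f : X → Y} (hf : Continuous f)
    (hsurj : Function.Surjective f) : Small.{0} Y := by
  have : SigmaCompactSpace Y :=
    isSigmaCompact_univ_iff.1 (hsurj.range_eq ▸ isSigmaCompact_range hf)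
  obtain ⟨e, he⟩ := KuratowskiEmbedding.exists_isometric_embedding Y
  exact small_of_injective he.injective

section NhdsOne

variable {G : Type*} [Group G] [TopologicalSpace G] [IsTopologicalGroup G]

theorem exists_nhds_one_mul_mul_conj_subset {C V : Set G} (hC : IsCompact C)
    (hV : V ∈ 𝓝 1) :
    ∃ V' ∈ 𝓝 (1 : G), V'⁻¹ = V' ∧ V' * V' * V' ⊆ V ∧ ∀ x ∈ C, ∀ g ∈ V', x * g * x⁻¹ ∈ V := by
  have hconj : ∀ᶠ g in 𝓝 (1 : G), ∀ x ∈ C, x * g * x⁻¹ ∈ V :=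
    hC.eventually_forall_of_forall_eventually fun x _ =>
      (by fun_prop : Continuous fun z : G × G => z.2 * z.1 * z.2⁻¹).continuousAt.eventually_mem
        (by simpa using hV)
  obtain ⟨U, hU, hUV⟩ := exists_nhds_one_split4 hV
  set S := U ∩ {g | ∀ x ∈ C, x * g * x⁻¹ ∈ V}
  have hS : S ∈ 𝓝 (1 : G) := inter_mem hU hconj
  refine ⟨S ∩ S⁻¹, inter_mem hS (inv_mem_nhds_one G hS), by rw [inter_inv, inv_inv, inter_comm],
    ?_, fun x hx g hg => hg.1.2 x hx⟩
  rintro _ ⟨_, ⟨a, ha, b, hb, rfl⟩, c, hc, rfl⟩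
  simpa using hUV ha.1.1 hb.1.1 hc.1.1 (mem_of_mem_nhds hU)

theorem exists_seq_isCompact_mul_mul_subset [SigmaCompactSpace G]
    [WeaklyLocallyCompactSpace G] :
    ∃ U : ℕ → Set G, U 0 ∈ 𝓝 1 ∧ (∀ n, IsCompact (U n)) ∧ (∀ n, (U n)⁻¹ = U n) ∧
      (∀ n, U n * U n * U n ⊆ U (n + 1)) ∧ ∀ g, ∃ n, g ∈ U n := by
  obtain ⟨K, hKc, hK⟩ := exists_compact_mem_nhds (1 : G)
  let U : ℕ → Set G := fun n => Nat.rec (K ∪ K⁻¹)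
    (fun k Uk => Uk * Uk * Uk ∪ (compactCovering G k ∪ (compactCovering G k)⁻¹)) n
  have hU : ∀ n, IsCompact (U n) ∧ (U n)⁻¹ = U n := by
    intro n
    induction n with
    | zero =>
      exact ⟨hKc.union hKc.inv, show (K ∪ K⁻¹)⁻¹ = K ∪ K⁻¹ by
        rw [union_inv, inv_inv, union_comm]⟩
    | succ k ih =>
      have hL := isCompact_compactCovering G k
      refine ⟨((ih.1.mul ih.1).mul ih.1).union (hL.union hL.inv), ?_⟩
      change (U k * U k * U k ∪ (compactCovering G k ∪ (compactCovering G k)⁻¹))⁻¹ =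
        U k * U k * U k ∪ (compactCovering G k ∪ (compactCovering G k)⁻¹)
      rw [union_inv, union_inv, inv_inv, union_comm _ (compactCovering G k), mul_inv_rev,
        mul_inv_rev, ih.2, mul_assoc]
  refine ⟨U, mem_of_superset hK subset_union_left, fun n => (hU n).1, fun n => (hU n).2,
    fun n => subset_union_left, fun g => ?_⟩
  obtain ⟨n, hn⟩ := exists_mem_compactCovering g
  exact ⟨n + 1, Or.inr (Or.inl hn)⟩

theorem exists_seq_nhds_one_conj_subset {U : ℕ → Set G} (hU : ∀ n, IsCompact (U n))
    {V₀ : Set G} (hV₀ : V₀ ∈ 𝓝 1) :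
    ∃ V : ℕ → Set G, V 0 = V₀ ∧ (∀ n, V n ∈ 𝓝 1) ∧ (∀ n, (V (n + 1))⁻¹ = V (n + 1)) ∧
      (∀ n, V (n + 1) * V (n + 1) * V (n + 1) ⊆ V n) ∧
      ∀ n, ∀ x ∈ U n, ∀ g ∈ V (n + 1), x * g * x⁻¹ ∈ V n := by
  choose! S hS using fun n (V : Set G) (hV : V ∈ 𝓝 1) =>
    exists_nhds_one_mul_mul_conj_subset (hU n) hV
  let V : ℕ → Set G := fun n => Nat.rec V₀ (fun k Vk => S k Vk) n
  have hV : ∀ n, V n ∈ 𝓝 1 := fun n => Nat.rec hV₀ (fun k ih => (hS k _ ih).1) n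
  exact ⟨V, rfl, hV, fun n => (hS n _ (hV n)).2.1, fun n => (hS n _ (hV n)).2.2.1,
    fun n => (hS n _ (hV n)).2.2.2⟩

end NhdsOne

structure GroupScale (G : Type*) [Group G] where
  toFun : ℤ → Set G
  inv_eq : ∀ n, (toFun n)⁻¹ = toFun n
  one_mem : ∀ n, (1 : G) ∈ toFun n
  mul_mul_subset : ∀ n, toFun n * toFun n * toFun n ⊆ toFun (n + 1)
  exists_mem : ∀ g, ∃ n, g ∈ toFun n

namespace GroupScale

variable {G Q : Type*} [Group G] [Group Q] (W : GroupScale G)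

instance : CoeFun (GroupScale G) fun _ => ℤ → Set G := ⟨toFun⟩

theorem inv_mem {n : ℤ} {g : G} (h : g ∈ W n) : g⁻¹ ∈ W n := by
  rw [← W.inv_eq]; exact Set.inv_mem_inv.2 h

theorem mul_mul_mem {n : ℤ} {a b c : G} (ha : a ∈ W n) (hb : b ∈ W n) (hc : c ∈ W n) :
    a * b * c ∈ W (n + 1) :=
  W.mul_mul_subset n (mul_mem_mul (mul_mem_mul ha hb) hc)

theorem monotone : Monotone W :=
  monotone_int_of_le_succ fun n g hg => by
    simpa using W.mul_mul_mem (W.one_mem n) (W.one_mem n) hg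

def kernel : Subgroup G where
  carrier := {g | ∀ n, g ∈ W n}
  one_mem' := W.one_mem
  mul_mem' {a b} ha hb n := by
    simpa using W.mul_mul_mem (ha (n - 1)) (hb (n - 1)) (W.one_mem (n - 1))
  inv_mem' ha n := W.inv_mem (ha n)

noncomputable def length (g : G) : ℝ≥0 := ⨅ n : {n : ℤ // g ∈ W n}, (2 : ℝ≥0) ^ (n : ℤ)

theorem length_le_zpow {g : G} {n : ℤ} (h : g ∈ W n) : W.length g ≤ 2 ^ n :=
  ciInf_le_of_le (OrderBot.bddBelow _) ⟨n, h⟩ le_rfl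

theorem le_length {g : G} {x : ℝ≥0} (h : ∀ n, g ∈ W n → x ≤ 2 ^ n) : x ≤ W.length g :=
  have : Nonempty {n : ℤ // g ∈ W n} := let ⟨n, hn⟩ := W.exists_mem g; ⟨⟨n, hn⟩⟩
  le_ciInf fun n => h n n.2

theorem length_le_zpow_iff {g : G} {n : ℤ} : W.length g ≤ 2 ^ n ↔ g ∈ W n := by
  refine ⟨fun h => ?_, W.length_le_zpow⟩
  by_contra hg
  have : (2 : ℝ≥0) ^ (n + 1) ≤ W.length g := W.le_length fun m hm =>
    zpow_le_zpow_right₀ one_le_two (Int.add_one_le_of_lt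
      (lt_of_not_ge fun hmn => hg (W.monotone hmn hm)))
  exact (zpow_lt_zpow_right₀ one_lt_two (Int.lt_succ n)).not_ge (this.trans h)

theorem length_inv (g : G) : W.length g⁻¹ = W.length g :=
  le_antisymm (W.le_length fun _ h => W.length_le_zpow (W.inv_mem h))
    (W.le_length fun _ h => W.length_le_zpow (by simpa using W.inv_mem h))

theorem length_eq_zero_iff {g : G} : W.length g = 0 ↔ g ∈ W.kernel := by
  refine ⟨fun h n => W.length_le_zpow_iff.1 (h ▸ zero_le), fun h => ?_⟩
  by_contra hne
  obtain ⟨n, hn⟩ := NNReal.exists_two_zpow_lt (pos_iff_ne_zero.2 hne)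
  exact (W.length_le_zpow (h n)).not_gt hn

theorem length_mul_mul_le (a b c : G) :
    W.length (a * b * c) ≤ 2 * max (W.length a) (max (W.length b) (W.length c)) := by
  obtain ⟨x, hx⟩ : ∃ x, max (W.length a) (max (W.length b) (W.length c)) = W.length x := by
    rcases max_choice (W.length a) (max (W.length b) (W.length c)) with h | h
    · exact ⟨a, h⟩
    rcases max_choice (W.length b) (W.length c) with h' | h'
    · exact ⟨b, h.trans h'⟩
    · exact ⟨c, h.trans h'⟩
  rw [hx, ← div_le_iff₀' two_pos]
  refine W.le_length fun n hn => ?_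
  have hmax := hx.trans_le (W.length_le_zpow hn)
  simp only [max_le_iff, length_le_zpow_iff] at hmax
  rw [div_le_iff₀' two_pos, ← zpow_one_add₀ two_ne_zero, add_comm]
  exact W.length_le_zpow (W.mul_mul_mem hmax.1 hmax.2.1 hmax.2.2)

section Map

variable (f : G →* Q) (hf : Function.Surjective f)

def map : GroupScale Q where
  toFun n := f '' W n
  inv_eq n := by rw [← Set.image_inv, W.inv_eq]
  one_mem n := ⟨1, W.one_mem n, map_one f⟩
  mul_mul_subset n := by
    rw [← Set.image_mul, ← Set.image_mul]
    exact Set.image_mono (W.mul_mul_subset n)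
  exists_mem q := by
    obtain ⟨g, rfl⟩ := hf q
    obtain ⟨n, hn⟩ := W.exists_mem g
    exact ⟨n, g, hn, rfl⟩

variable {f}

theorem length_map_le (g : G) : (W.map f hf).length (f g) ≤ W.length g :=
  W.le_length fun _ hn => (W.map f hf).length_le_zpow ⟨g, hn, rfl⟩

theorem mem_of_map_mem (hker : f.ker ≤ W.kernel) {g : G} {n : ℤ} (h : f g ∈ W.map f hf n) :
    g ∈ W (n + 1) := by
  obtain ⟨w, hw, hwg⟩ := h
  have : w⁻¹ * g ∈ W n :=
    hker (by rw [MonoidHom.mem_ker, map_mul, map_inv, hwg, inv_mul_cancel]) n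
  simpa using W.mul_mul_mem hw this (W.one_mem n)

theorem length_le_two_mul_length_map (hker : f.ker ≤ W.kernel) (g : G) :
    W.length g ≤ 2 * (W.map f hf).length (f g) := by
  rw [← div_le_iff₀' two_pos]
  refine (W.map f hf).le_length fun n hn => ?_
  rw [div_le_iff₀' two_pos, ← zpow_one_add₀ two_ne_zero, add_comm]
  exact W.length_le_zpow (W.mem_of_map_mem hf hker hn)

theorem kernel_map (hker : f.ker = W.kernel) : (W.map f hf).kernel = ⊥ := by
  refine (Subgroup.eq_bot_iff_forall _).2 fun q hq => ?_
  obtain ⟨g, rfl⟩ := hf q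
  rw [← MonoidHom.mem_ker, hker]
  exact fun n => by simpa using W.mem_of_map_mem hf hker.le (hq (n - 1))

end Map

theorem exists_metricSpace (hW : W.kernel = ⊥) :
    ∃ _ : MetricSpace G, (∀ k x y : G, dist (k * x) (k * y) = dist x y) ∧
      ∀ x y : G, dist x y ≤ W.length (x⁻¹ * y) ∧ W.length (x⁻¹ * y) ≤ 2 * dist x y := by
  let d : G → G → ℝ≥0 := fun x y => W.length (x⁻¹ * y)
  have d_self (x : G) : d x x = 0 := by
    simp only [d, inv_mul_cancel, length_eq_zero_iff]
    exact W.kernel.one_mem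
  have d_comm (x y : G) : d x y = d y x := by
    simp only [d]; rw [← W.length_inv, mul_inv_rev, inv_inv]
  have d_quad (x₁ x₂ x₃ x₄ : G) : d x₁ x₄ ≤ 2 * max (d x₁ x₂) (max (d x₂ x₃) (d x₃ x₄)) := by
    simpa [d, mul_assoc] using W.length_mul_mul_le (x₁⁻¹ * x₂) (x₂⁻¹ * x₃) (x₃⁻¹ * x₄)
  have d_mul_left (k x y : G) : d (k * x) (k * y) = d x y := by simp [d, mul_assoc]
  let _ := PseudoMetricSpace.ofPreNNDist d d_self d_comm
  have le_dist (x y : G) : (d x y : ℝ) ≤ 2 * dist x y :=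
    PseudoMetricSpace.le_two_mul_dist_ofPreNNDist d d_self d_comm d_quad x y
  refine ⟨{ eq_of_dist_eq_zero := fun {x y} h => ?_ }, fun k x y => ?_, fun x y =>
    ⟨PseudoMetricSpace.dist_ofPreNNDist_le d d_self d_comm x y, le_dist x y⟩⟩
  · have hd : (d x y : ℝ) ≤ 0 := by simpa [h] using le_dist x y
    have : d x y = 0 := by exact_mod_cast le_antisymm hd (NNReal.coe_nonneg _)
    simpa [hW, inv_mul_eq_one] using W.length_eq_zero_iff.1 this
  · refine le_antisymm
      (PseudoMetricSpace.dist_ofPreNNDist_map_le d d_self d_comm (d_mul_left k) x y) ?_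
    simpa using PseudoMetricSpace.dist_ofPreNNDist_map_le d d_self d_comm (φ := (k⁻¹ * ·))
      (fun x y => by simpa using d_mul_left k⁻¹ x y) (k * x) (k * y)

theorem exists_metricSpace_of_ker_eq {f : G →* Q} (hf : Function.Surjective f)
    (hker : f.ker = W.kernel) :
    ∃ _ : MetricSpace Q, (∀ k x y : Q, dist (k * x) (k * y) = dist x y) ∧
      ∀ x y : G, dist (f x) (f y) ≤ W.length (x⁻¹ * y) ∧
        W.length (x⁻¹ * y) ≤ 4 * dist (f x) (f y) := by
  obtain ⟨_, hinv, hdist⟩ := (W.map f hf).exists_metricSpace (W.kernel_map hf hker)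
  refine ⟨_, hinv, fun x y => ?_⟩
  obtain ⟨hle, hge⟩ := hdist (f x) (f y)
  rw [← map_inv, ← map_mul] at hle hge
  constructor
  · exact hle.trans (NNReal.coe_le_coe.2 (W.length_map_le hf _))
  · calc (W.length (x⁻¹ * y) : ℝ) ≤ 2 * (W.map f hf).length (f (x⁻¹ * y)) := by
          exact_mod_cast W.length_le_two_mul_length_map hf hker.le _
      _ ≤ 2 * (2 * dist (f x) (f y)) := by gcongr
      _ = 4 * dist (f x) (f y) := by ring

section Topology

variable [TopologicalSpace G]

theorem tendsto_length_nhds_one (hW : ∀ n, W n ∈ 𝓝 1) : Tendsto W.length (𝓝 1) (𝓝 0) := by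
  refine tendsto_order.2 ⟨fun a ha => absurd ha not_lt_zero, fun ε hε => ?_⟩
  obtain ⟨n, hn⟩ := NNReal.exists_two_zpow_lt hε
  filter_upwards [hW n] with g hg using (W.length_le_zpow hg).trans_lt hn

variable [IsTopologicalGroup G]

theorem continuous_of_dist_le {X : Type*} [PseudoMetricSpace X] (hW : ∀ n, W n ∈ 𝓝 1)
    {f : G → X} (hf : ∀ x y, dist (f x) (f y) ≤ W.length (x⁻¹ * y)) : Continuous f := by
  refine continuous_iff_continuousAt.2 fun x => tendsto_iff_dist_tendsto_zero.2 ?_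
  have hx : Tendsto (fun y => x⁻¹ * y) (𝓝 x) (𝓝 1) := by
    simpa using (continuous_const_mul x⁻¹).tendsto x
  refine squeeze_zero (fun _ => dist_nonneg) (fun y => (dist_comm _ _).trans_le (hf x y)) ?_
  exact NNReal.tendsto_coe.2 ((W.tendsto_length_nhds_one hW).comp hx)

theorem isCompact_closure_of_isBounded_image (hW : ∀ n : ℕ, IsCompact (W n))
    {X : Type*} [PseudoMetricSpace X] {f : G → X} {C : ℝ≥0}
    (hf : ∀ x y, W.length (x⁻¹ * y) ≤ C * dist (f x) (f y)) {A : Set G}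
    (hA : Bornology.IsBounded (f '' A)) : IsCompact (closure A) := by
  rcases A.eq_empty_or_nonempty with rfl | ⟨a, ha⟩
  · simp
  obtain ⟨r, hr⟩ := (Metric.isBounded_iff_subset_closedBall (f a)).1 hA
  obtain ⟨n, hn⟩ := pow_unbounded_of_one_lt (C * r) one_lt_two
  refine ((hW n).image (continuous_const_mul a)).closure_of_subset fun b hb => ?_
  have hab : W.length (a⁻¹ * b) ≤ (2 : ℝ≥0) ^ (n : ℤ) := by
    rw [← NNReal.coe_le_coe]
    calc (W.length (a⁻¹ * b) : ℝ) ≤ C * dist (f a) (f b) := hf a b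
      _ ≤ C * r := by
        gcongr
        exact dist_comm (f a) (f b) ▸ hr (mem_image_of_mem f hb)
      _ ≤ 2 ^ n := hn.le
      _ = _ := by simp
  exact ⟨a⁻¹ * b, W.length_le_zpow_iff.1 hab, mul_inv_cancel_left a b⟩

theorem exists_of_sigmaCompact [SigmaCompactSpace G] [WeaklyLocallyCompactSpace G] :
    ∃ W : GroupScale G, (∀ n, W n ∈ 𝓝 1) ∧ (∀ n : ℕ, IsCompact (W n)) ∧ W.kernel.Normal := by
  obtain ⟨U, hU0, hUc, hUinv, hUmul, hUcover⟩ := exists_seq_isCompact_mul_mul_subset (G := G)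
  obtain ⟨V, hV0, hVnhds, hVinv, hVmul, hVconj⟩ := exists_seq_nhds_one_conj_subset hUc hU0
  let w : ℤ → Set G
    | (n : ℕ) => U n
    | .negSucc n => V (n + 1)
  have hw_neg (n : ℕ) : w (-n) = V n := by
    rcases n with _ | n
    · exact hV0.symm
    · rfl
  have hU_one (n : ℕ) : (1 : G) ∈ U n := by
    induction n with
    | zero => exact mem_of_mem_nhds hU0
    | succ k ih => simpa using hUmul k (mul_mem_mul (mul_mem_mul ih ih) ih)
  let W : GroupScale G :=
    { toFun := w
      inv_eq
        | (n : ℕ) => hUinv n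
        | .negSucc n => hVinv n
      one_mem
        | (n : ℕ) => hU_one n
        | .negSucc n => mem_of_mem_nhds (hVnhds (n + 1))
      mul_mul_subset
        | (n : ℕ) => hUmul n
        | .negSucc n => by
          rw [show Int.negSucc n + 1 = -n by omega, hw_neg]
          exact hVmul n
      exists_mem g := let ⟨n, hn⟩ := hUcover g; ⟨n, hn⟩ }
  refine ⟨W, fun n => mem_of_superset (hw_neg n.natAbs ▸ hVnhds n.natAbs)
    (W.monotone (by omega)), hUc, ⟨fun g hg x n => ?_⟩⟩
  obtain ⟨k, hk⟩ := hUcover x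
  set m := k + n.natAbs
  have hx : x ∈ U m := W.monotone (show (k : ℤ) ≤ (m : ℤ) by omega) hk
  have hconj : x * g * x⁻¹ ∈ w (-m) := by
    rw [hw_neg]
    exact hVconj m x hx g (hw_neg (m + 1) ▸ hg (-(m + 1 : ℕ)))
  exact W.monotone (show -(m : ℤ) ≤ n by omega) hconj

end Topology

end GroupScale

theorem exists_leftInvariant_metric_hom_isCompact_closure {G : Type*} [Group G]
    [TopologicalSpace G] [IsTopologicalGroup G] [SigmaCompactSpace G]
    [WeaklyLocallyCompactSpace G] :
    ∃ (H : Type) (_ : Group H) (_ : MetricSpace H),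
      (∀ k g h : H, dist (k * g) (k * h) = dist g h) ∧
      ∃ f : G →* H, Continuous f ∧
        ∀ A : Set G, Bornology.IsBounded ((f : G → H) '' A) → IsCompact (closure A) := by
  obtain ⟨W, hW_nhds, hW_compact, _⟩ := GroupScale.exists_of_sigmaCompact (G := G)
  have hπ := QuotientGroup.mk'_surjective W.kernel
  have : Small.{0} (G ⧸ W.kernel) := by
    obtain ⟨_, -, hdist⟩ := W.exists_metricSpace_of_ker_eq hπ (QuotientGroup.ker_mk' _)
    exact small_of_sigmaCompact_of_continuous_surjective
      (W.continuous_of_dist_le hW_nhds fun x y => (hdist x y).1) hπ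
  let e : G ⧸ W.kernel ≃* Shrink.{0} (G ⧸ W.kernel) := Shrink.mulEquiv.symm
  let f : G →* Shrink.{0} (G ⧸ W.kernel) := e.toMonoidHom.comp (QuotientGroup.mk' W.kernel)
  have hker : f.ker = W.kernel := by
    rw [MonoidHom.ker_comp_of_injective _ _ e.injective, QuotientGroup.ker_mk']
  obtain ⟨_, hinv, hdist⟩ := W.exists_metricSpace_of_ker_eq (e.surjective.comp hπ) hker
  refine ⟨_, inferInstance, ‹_›, hinv, f,
    W.continuous_of_dist_le hW_nhds fun x y => (hdist x y).1,
    fun A => W.isCompact_closure_of_isBounded_image hW_compact (C := 4) fun x y => ?_⟩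
  exact_mod_cast (hdist x y).2

theorem relativelyCompact_iff_bounded_image_sigmaCompact_general
    {G : Type*} [Group G] [TopologicalSpace G] [IsTopologicalGroup G]
    [SigmaCompactSpace G] [LocallyCompactSpace G] (A : Set G) :
    IsCompact (closure A) ↔
      ∀ (H : Type) [Group H] [MetricSpace H],
        (∀ k g h : H, dist (k * g) (k * h) = dist g h) →
        ∀ f : G →* H, Continuous f → Bornology.IsBounded ((f : G → H) '' A) := by
  refine ⟨fun hA H _ _ _ f hf => (hA.image hf).isBounded.subset (image_mono subset_closure),
    fun h => ?_⟩
  obtain ⟨H, _, _, hinv, f, hf, hproper⟩ :=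
    exists_leftInvariant_metric_hom_isCompact_closure (G := G)
  exact hproper A (h H hinv f hf)

/-- In a σ-compact locally compact Hausdorff topological group, a subset `A` is relatively
compact if and only if for every group `H` with a left-invariant metric and every continuous
group homomorphism `f : G → H` (for the metric topology on `H`), the image `f '' A` is
bounded. -/
theorem relativelyCompact_iff_bounded_image_sigmaCompact
    {G : Type*} [Group G] [TopologicalSpace G] [IsTopologicalGroup G]
    [SigmaCompactSpace G] [LocallyCompactSpace G] [T2Space G] (A : Set G) :
    IsCompact (closure A) ↔
      ∀ (H : Type) [Group H] [MetricSpace H],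
        (∀ k g h : H, dist (k * g) (k * h) = dist g h) →
        ∀ f : G →* H, Continuous f → Bornology.IsBounded ((f : G → H) '' A) :=
  relativelyCompact_iff_bounded_image_sigmaCompact_general A
end

section
/- Let G be an abelian topological group and let A ⊆ G. Then f(A) is a bounded subset of ℝ for every continuous quasi-homomorphism f : G → ℝ if and only if f(A) is a bounded subset of ℝ for every continuous group homomorphism f : G → ℝ. -/
/-!
A quasi-homomorphism `f : G → ℝ` with defect `C` lies within distance `C` of its homogenization
`φ x = lim f (2 ^ n • x) / 2 ^ n`, and on an abelian group `φ` is additive, the defect of `φ` being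
a limit of `C / 2 ^ n`. Since `f` is continuous, it is bounded on a neighbourhood of `0`, hence so
is `φ`, and an additive map to `ℝ` bounded near `0` is continuous. Thus `f '' A` is bounded as soon
as `φ '' A` is.
-/

open Filter Topology Bornology

theorem isBounded_image_of_dist_le {α β : Type*} [PseudoMetricSpace β] {f g : α → β}
    {s : Set α} {C : ℝ} (hg : IsBounded (g '' s)) (hfg : ∀ x ∈ s, dist (f x) (g x) ≤ C) :
    IsBounded (f '' s) := by
  obtain ⟨R, hR⟩ := Metric.isBounded_image_iff.mp hg
  refine Metric.isBounded_image_iff.mpr ⟨C + R + C, fun x hx y hy => ?_⟩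
  calc dist (f x) (f y) ≤ dist (f x) (g x) + dist (g x) (g y) + dist (g y) (f y) :=
        dist_triangle4 _ _ _ _
    _ ≤ C + R + C := by
        gcongr
        · exact hfg x hx
        · exact hR x hx y hy
        · exact dist_comm (g y) (f y) ▸ hfg y hy

theorem AddMonoidHom.continuous_of_isBounded_nhds_zero' {G E : Type*} [AddGroup G]
    [TopologicalSpace G] [IsTopologicalAddGroup G] [NormedAddCommGroup E] [NormedSpace ℝ E]
    (φ : G →+ E) {U : Set G} (hU : U ∈ 𝓝 0) (hφU : IsBounded (φ '' U)) : Continuous φ := by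
  obtain ⟨R, hR⟩ := isBounded_iff_forall_norm_le.mp hφU
  refine continuous_of_tendsto_nhds_zero φ (NormedAddGroup.tendsto_nhds_zero.mpr fun ε hε => ?_)
  have hR0 : 0 ≤ R := by simpa using hR _ (Set.mem_image_of_mem φ (mem_of_mem_nhds hU))
  obtain ⟨n, hn⟩ := exists_nat_gt (R / ε)
  have hnsmul : Tendsto (fun x : G => n • x) (𝓝 0) (𝓝 0) := by
    simpa using (continuous_nsmul n).tendsto (0 : G)
  filter_upwards [hnsmul hU] with x hx
  have hbound : n * ‖φ x‖ ≤ R := by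
    simpa [RCLike.norm_nsmul ℝ] using hR _ (Set.mem_image_of_mem φ hx)
  have hn0 : (0 : ℝ) < n := (div_nonneg hR0 hε.le).trans_lt hn
  rw [div_lt_iff₀ hε] at hn
  nlinarith

noncomputable def homogenization {M : Type*} [AddMonoid M] (f : M → ℝ) (x : M) : ℝ :=
  limUnder atTop fun n : ℕ => f (2 ^ n • x) / 2 ^ n

section AddMonoid

variable {M : Type*} [AddMonoid M] {f : M → ℝ} {C : ℝ}

theorem dist_div_two_pow_succ_le (hf : ∀ x y, |f (x + y) - f x - f y| ≤ C) (x : M) (n : ℕ) :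
    dist (f (2 ^ n • x) / 2 ^ n) (f (2 ^ (n + 1) • x) / 2 ^ (n + 1)) ≤ C / 2 / 2 ^ n := by
  set y := 2 ^ n • x
  have hdouble : 2 ^ (n + 1) • x = y + y := by rw [pow_succ, mul_nsmul, two_nsmul]
  rw [hdouble, Real.dist_eq, abs_sub_comm]
  calc |f (y + y) / 2 ^ (n + 1) - f y / 2 ^ n|
      = |(f (y + y) - f y - f y) / 2 ^ (n + 1)| := by
        congr 1
        field_simp
        ring
    _ = |f (y + y) - f y - f y| / 2 ^ (n + 1) := by rw [abs_div, abs_of_pos (by positivity : (0 : ℝ) < 2 ^ (n + 1))]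
    _ ≤ C / 2 ^ (n + 1) := by gcongr; exact hf y y
    _ = C / 2 / 2 ^ n := by rw [pow_succ]; ring

theorem tendsto_homogenization (hf : ∀ x y, |f (x + y) - f x - f y| ≤ C) (x : M) :
    Tendsto (fun n : ℕ => f (2 ^ n • x) / 2 ^ n) atTop (𝓝 (homogenization f x)) :=
  (cauchySeq_of_le_geometric_two (dist_div_two_pow_succ_le hf x)).tendsto_limUnder

theorem dist_homogenization_le (hf : ∀ x y, |f (x + y) - f x - f y| ≤ C) (x : M) :
    dist (f x) (homogenization f x) ≤ C := by
  simpa using dist_le_of_le_geometric_two_of_tendsto₀ (dist_div_two_pow_succ_le hf x)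
    (tendsto_homogenization hf x)

end AddMonoid

section AddCommMonoid

variable {M : Type*} [AddCommMonoid M] {f : M → ℝ} {C : ℝ}

theorem homogenization_add (hf : ∀ x y, |f (x + y) - f x - f y| ≤ C) (x y : M) :
    homogenization f (x + y) = homogenization f x + homogenization f y := by
  rw [← sub_eq_zero, sub_add_eq_sub_sub]
  have hlim := ((tendsto_homogenization hf (x + y)).sub (tendsto_homogenization hf x)).sub
    (tendsto_homogenization hf y)
  refine tendsto_nhds_unique hlim (squeeze_zero_norm (a := fun n : ℕ => C / 2 ^ n) (fun n => ?_) ?_)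
  · rw [Real.norm_eq_abs, smul_add, ← sub_div, ← sub_div, abs_div,
      abs_of_pos (by positivity : (0 : ℝ) < 2 ^ n)]
    gcongr
    exact hf _ _
  · simpa using tendsto_const_nhds.div_atTop (tendsto_pow_atTop_atTop_of_one_lt one_lt_two)

noncomputable def homogenizationHom (hf : ∀ x y, |f (x + y) - f x - f y| ≤ C) : M →+ ℝ :=
  AddMonoidHom.mk' (homogenization f) (homogenization_add hf)

end AddCommMonoid

/-- In an abelian topological group, a subset `A` has bounded image under every continuous
quasi-homomorphism `f : G → ℝ` if and only if it has bounded image under every continuous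
group homomorphism `f : G → ℝ`. -/
theorem bounded_under_quasiHoms_iff_bounded_under_homs
    {G : Type*} [AddCommGroup G] [TopologicalSpace G] [IsTopologicalAddGroup G] (A : Set G) :
    (∀ f : G → ℝ, Continuous f →
        (∃ C : ℝ, 0 ≤ C ∧ ∀ x y : G, |f (x + y) - f x - f y| ≤ C) →
        Bornology.IsBounded (f '' A)) ↔
      (∀ f : G →+ ℝ, Continuous f → Bornology.IsBounded ((f : G → ℝ) '' A)) := by
  refine ⟨fun h f hf => h f hf ⟨0, le_rfl, by simp⟩, ?_⟩
  rintro h f hf ⟨C, -, hC⟩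
  set φ := homogenizationHom hC
  have hφf : ∀ x, dist (φ x) (f x) ≤ C := fun x => dist_comm (f x) _ ▸ dist_homogenization_le hC x
  have hfU : IsBounded (f '' (f ⁻¹' Metric.ball (f 0) 1)) :=
    Metric.isBounded_ball.subset (Set.image_preimage_subset f _)
  have hφ : Continuous φ :=
    φ.continuous_of_isBounded_nhds_zero'
      (hf.continuousAt.preimage_mem_nhds (Metric.ball_mem_nhds (f 0) one_pos))
      (isBounded_image_of_dist_le hfU fun x _ => hφf x)
  exact isBounded_image_of_dist_le (h φ hφ) fun x _ => dist_comm (φ x) (f x) ▸ hφf x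
end

section
/- Let G be an abelian group regarded with the discrete topology, and let A ⊆ G. Then A is finite if and only if for every group H equipped with a left-invariant metric d and every group homomorphism f : G → H, the image f(A) is d-bounded. -/
/-!
If `A` is infinite, choose an injective sequence in `A`. The subgroup it generates is countable,
so it embeds into a countable divisible group `D`, a quotient of `ℕ →₀ ℚ`. Divisible groups are
injective `ℤ`-modules, so the embedding extends to a homomorphism `f : G → D` that is injective on
the sequence, and `f '' A` is infinite.

A countable group `{q₀, q₁, …}` is exhausted by the finite symmetric sets `S₀ = {1}`,
`Sₙ₊₁ = Sₙ ∪ Sₙ Sₙ ∪ {qₙ, qₙ⁻¹}`, which satisfy `Sₘ Sₙ ⊆ Sₘ₊ₙ`; hence `x ↦ min {n | x ∈ Sₙ}` is a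
group norm with finite sublevel sets. On the commutative group `D` its metric is left-invariant,
and the infinite set `f '' A` is unbounded for it.
-/

open Function Set Pointwise

namespace Group

variable {Q : Type*} [Group Q] (q : ℕ → Q)

def enumBall : ℕ → Set Q
  | 0 => {1}
  | n + 1 => enumBall n ∪ enumBall n * enumBall n ∪ {q n, (q n)⁻¹}

theorem enumBall_mono : Monotone (enumBall q) :=
  monotone_nat_of_le_succ fun _ => subset_union_left.trans subset_union_left

theorem enumBall_finite : ∀ n, (enumBall q n).Finite
  | 0 => finite_singleton 1
  | n + 1 => ((enumBall_finite n).union ((enumBall_finite n).mul (enumBall_finite n))).union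
      ((finite_singleton _).insert _)

theorem one_mem_enumBall (n : ℕ) : (1 : Q) ∈ enumBall q n :=
  enumBall_mono q (Nat.zero_le n) rfl

theorem inv_mem_enumBall : ∀ {n : ℕ} {x : Q}, x ∈ enumBall q n → x⁻¹ ∈ enumBall q n
  | 0, _, hx => by rw [mem_singleton_iff.1 hx, inv_one]; rfl
  | n + 1, _, Or.inl (Or.inl hx) => Or.inl (Or.inl (inv_mem_enumBall hx))
  | n + 1, _, Or.inl (Or.inr ⟨a, ha, b, hb, rfl⟩) =>
      Or.inl (Or.inr ⟨b⁻¹, inv_mem_enumBall hb, a⁻¹, inv_mem_enumBall ha, (mul_inv_rev a b).symm⟩)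
  | n + 1, _, Or.inr (Or.inl rfl) => Or.inr (Or.inr rfl)
  | n + 1, _, Or.inr (Or.inr rfl) => Or.inr (Or.inl (inv_inv _))

theorem mul_mem_enumBall {m n : ℕ} {a b : Q} (ha : a ∈ enumBall q m) (hb : b ∈ enumBall q n) :
    a * b ∈ enumBall q (m + n) := by
  rcases Nat.eq_zero_or_pos m with rfl | hm
  · rw [show a = 1 from ha, one_mul, zero_add]; exact hb
  rcases Nat.eq_zero_or_pos n with rfl | hn
  · rw [show b = 1 from hb, mul_one, add_zero]; exact ha
  have hmax : a * b ∈ enumBall q (max m n + 1) :=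
    Or.inl (Or.inr ⟨a, enumBall_mono q (le_max_left m n) ha,
      b, enumBall_mono q (le_max_right m n) hb, rfl⟩)
  exact enumBall_mono q (by omega) hmax

noncomputable def enumLength (x : Q) : ℕ := sInf {n | x ∈ enumBall q n}

variable {q}

theorem enumLength_le_iff (hq : Surjective q) {x : Q} {n : ℕ} :
    enumLength q x ≤ n ↔ x ∈ enumBall q n := by
  refine ⟨fun h => enumBall_mono q h (Nat.sInf_mem (s := {n | x ∈ enumBall q n}) ?_),
    fun h => Nat.sInf_le h⟩
  obtain ⟨m, rfl⟩ := hq x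
  exact ⟨m + 1, Or.inr (Or.inl rfl)⟩

theorem mem_enumBall_enumLength (hq : Surjective q) (x : Q) : x ∈ enumBall q (enumLength q x) :=
  (enumLength_le_iff hq).1 le_rfl

noncomputable def enumNorm (hq : Surjective q) : GroupNorm Q where
  toFun x := enumLength q x
  map_one' := by
    simp [Nat.le_zero.1 ((enumLength_le_iff hq).2 (one_mem_enumBall q 0))]
  mul_le' x y := by
    exact_mod_cast (enumLength_le_iff hq).2
      (mul_mem_enumBall q (mem_enumBall_enumLength hq x) (mem_enumBall_enumLength hq y))
  inv' x := by
    have h : ∀ y : Q, enumLength q y⁻¹ ≤ enumLength q y := fun y =>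
      (enumLength_le_iff hq).2 (inv_mem_enumBall q (mem_enumBall_enumLength hq y))
    exact_mod_cast le_antisymm (h x) (by simpa using h x⁻¹)
  eq_one_of_map_eq_zero' x h :=
    (enumLength_le_iff hq).1 (Nat.le_zero.2 (by exact_mod_cast h))

theorem finite_setOf_enumNorm_le (hq : Surjective q) (C : ℝ) : {x | enumNorm hq x ≤ C}.Finite :=
  (enumBall_finite q ⌈C⌉₊).subset fun x hx => (enumLength_le_iff hq).1 <|
    Nat.cast_le.1 ((show (enumLength q x : ℝ) ≤ C from hx).trans (Nat.le_ceil C))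

theorem exists_groupNorm_finite_setOf_le (Q : Type*) [Group Q] [Countable Q] :
    ∃ N : GroupNorm Q, ∀ C : ℝ, {x | N x ≤ C}.Finite :=
  let ⟨_, hq⟩ := exists_surjective_nat Q
  ⟨enumNorm hq, finite_setOf_enumNorm_le hq⟩

end Group

namespace QuotientGroup

@[to_additive]
theorem map_injective_of_injective {A B : Type*} [Group A] [Group B] (N : Subgroup A) [N.Normal]
    {f : A →* B} (hf : Injective f) [(N.map f).Normal] :
    Injective (map N (N.map f) f (Subgroup.le_comap_map f N)) := by
  rw [← MonoidHom.ker_eq_bot_iff, ker_map, Subgroup.comap_map_eq_self_of_injective hf,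
    map_mk'_self]

end QuotientGroup

abbrev divisibleByIntOfModuleRat (V : Type*) [AddCommGroup V] [Module ℚ V] : DivisibleBy V ℤ where
  div x n := (n : ℚ)⁻¹ • x
  div_zero x := by simp
  div_cancel {n} x hn := by
    rw [← Int.cast_smul_eq_zsmul ℚ, smul_smul, mul_inv_cancel₀ (by exact_mod_cast hn), one_smul]

namespace AddCommGroup

theorem exists_countable_divisible_embedding (K : Type*) [AddCommGroup K] [Countable K] :
    ∃ (D : Type) (_ : AddCommGroup D) (_ : Countable D) (_ : DivisibleBy D ℤ) (j : K →+ D),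
      Injective j := by
  obtain ⟨q, hq⟩ := exists_surjective_nat K
  let π := (Finsupp.linearCombination ℤ q).toAddMonoidHom
  have hπ : Surjective π := fun k => by
    obtain ⟨n, rfl⟩ := hq k
    exact ⟨Finsupp.single n 1, by simp [π]⟩
  let ι : (ℕ →₀ ℤ) →+ (ℕ →₀ ℚ) := Finsupp.mapRange.addMonoidHom (Int.castAddHom ℚ)
  have hι : Injective ι := Finsupp.mapRange_injective _ (map_zero _) Int.cast_injective
  let N := π.ker.map ι
  let _ := divisibleByIntOfModuleRat (ℕ →₀ ℚ)
  exact ⟨_ ⧸ N, inferInstance, (QuotientAddGroup.mk'_surjective N).countable,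
    (QuotientAddGroup.mk'_surjective N).divisibleBy _ fun x n => map_zsmul _ n x,
    (QuotientAddGroup.map _ N ι (AddSubgroup.le_comap_map ι _)).comp
      (QuotientAddGroup.quotientKerEquivOfSurjective π hπ).symm.toAddMonoidHom,
    (QuotientAddGroup.map_injective_of_injective π.ker hι).comp
      (QuotientAddGroup.quotientKerEquivOfSurjective π hπ).symm.injective⟩

theorem exists_countable_hom_injOn {G : Type*} [AddCommGroup G] (K : AddSubgroup G)
    [Countable K] :
    ∃ (D : Type) (_ : AddCommGroup D) (_ : Countable D) (f : G →+ D), InjOn f K := by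
  obtain ⟨D, _, _, _, j, hj⟩ := exists_countable_divisible_embedding K
  obtain ⟨f, hf⟩ :=
    (Module.Baer.of_divisible D).extension_property_addMonoidHom K.subtype K.subtype_injective j
  refine ⟨D, _, ‹_›, f, fun x hx y hy hxy => ?_⟩
  have : j ⟨x, hx⟩ = j ⟨y, hy⟩ := by rw [← hf]; exact hxy
  exact congrArg Subtype.val (hj this)

end AddCommGroup

theorem CommGroup.exists_countable_hom_injective_comp {G : Type*} [CommGroup G] {a : ℕ → G}
    (ha : Injective a) :
    ∃ (Q : Type) (_ : CommGroup Q) (_ : Countable Q) (f : G →* Q), Injective (f ∘ a) := by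
  let K := (Submodule.span ℤ (range (Additive.ofMul ∘ a))).toAddSubgroup
  have : Countable K := inferInstanceAs (Countable (Submodule.span ℤ _))
  obtain ⟨D, _, _, f, hf⟩ := AddCommGroup.exists_countable_hom_injOn K
  refine ⟨Multiplicative D, _, inferInstanceAs (Countable D), f.toMultiplicativeRight,
    fun m n hmn => ha (hf (Submodule.subset_span ⟨m, rfl⟩) (Submodule.subset_span ⟨n, rfl⟩) hmn)⟩

theorem finite_iff_bounded_image_under_homs_abelian_general
    {G : Type*} [CommGroup G] (A : Set G) :
    A.Finite ↔
      ∀ (H : Type) [Group H] [MetricSpace H],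
        (∀ k g h : H, dist (k * g) (k * h) = dist g h) →
        ∀ f : G →* H, Bornology.IsBounded ((f : G → H) '' A) := by
  refine ⟨fun hA H _ _ _ f => (hA.image f).isBounded, fun hbdd => not_infinite.1 fun hA => ?_⟩
  let e := Set.Infinite.natEmbedding A hA
  have ha : Injective (fun n => (e n : G)) := Subtype.val_injective.comp e.injective
  obtain ⟨Q, _, _, f, hf⟩ := CommGroup.exists_countable_hom_injective_comp ha
  obtain ⟨N, hN⟩ := Group.exists_groupNorm_finite_setOf_le Q
  let _ := N.toNormedCommGroup
  obtain ⟨C, hC⟩ := isBounded_iff_forall_norm_le'.1 (hbdd Q dist_mul_left f)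
  refine infinite_range_of_injective hf ((hN C).subset ?_)
  rintro _ ⟨n, rfl⟩
  exact hC _ (mem_image_of_mem f (e n).2)

/-- For an abelian group `G` (with the discrete topology) and `A ⊆ G`: `A` is finite if and
only if for every group `H` with a left-invariant metric and every group homomorphism
`f : G → H`, the image `f '' A` is bounded. -/
theorem finite_iff_bounded_image_under_homs_abelian
    {G : Type*} [CommGroup G] [TopologicalSpace G] [DiscreteTopology G] (A : Set G) :
    A.Finite ↔
      ∀ (H : Type) [Group H] [MetricSpace H],
        (∀ k g h : H, dist (k * g) (k * h) = dist g h) →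
        ∀ f : G →* H, Bornology.IsBounded ((f : G → H) '' A) :=
  finite_iff_bounded_image_under_homs_abelian_general A
end

section
/- Let G be a topological group and let A ⊆ G be a subset with the following property: whenever (Vₙ)_{n ≥ 1} is a sequence of open subsets of G with Vₙ ⊆ Vₙ₊₁ and Vₙ·Vₙ ⊆ Vₙ₊₁ for all n, and ⋃ₙ Vₙ = G, there exists k with A ⊆ V_k. Then for every group H equipped with a left-invariant metric d and every continuous quasi-homomorphism f : G → H (H carrying the metric topology), the image f(A) is d-bounded. -/
/-!
Put `ℓ x = d(f x, 1)`. Left invariance and the quasi-homomorphism bound give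
`ℓ (x * y) ≤ ℓ x + ℓ y + C`, so for radii with `r (n + 1) = 2 * r n + C` the open
sublevel sets `{ℓ < r n}` form an exhaustion of `G` of the kind in the hypothesis.
Hence `A` lies in one of them, i.e. `f '' A` lies in a ball around `1`.
-/

open Pointwise

def IsExhaustionBounded {G : Type*} [Mul G] [TopologicalSpace G] (A : Set G) : Prop :=
  ∀ V : ℕ → Set G, (∀ n, IsOpen (V n)) → (∀ n, V n ⊆ V (n + 1)) →
    (∀ n, V n * V n ⊆ V (n + 1)) → (⋃ n, V n) = Set.univ → ∃ k, A ⊆ V k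

section QuasiSubadditive

variable {G : Type*} [Mul G] [TopologicalSpace G] {ℓ : G → ℝ} {C : ℝ}

theorem IsExhaustionBounded.exists_lt_of_quasiSubadditive {A : Set G}
    (hA : IsExhaustionBounded A) (hℓ : Continuous ℓ) (hC : 0 ≤ C)
    (hmul : ∀ x y, ℓ (x * y) ≤ ℓ x + ℓ y + C) : ∃ R, ∀ x ∈ A, ℓ x < R := by
  set r : ℕ → ℝ := fun n => 2 ^ n * (C + 1) - C with hr
  have hr_succ : ∀ n, r (n + 1) = 2 * r n + C := fun n => by simp only [hr, pow_succ]; ring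
  have hr_pos : ∀ n, 0 < r n + C := fun n => by simp only [hr, sub_add_cancel]; positivity
  obtain ⟨k, hk⟩ := hA (fun n => ℓ ⁻¹' Set.Iio (r n)) (fun n => isOpen_Iio.preimage hℓ)
    (fun n x (hx : ℓ x < r n) => show ℓ x < r (n + 1) by linarith [hr_succ n, hr_pos n])
    (by
      rintro n _ ⟨x, hx : ℓ x < r n, y, hy : ℓ y < r n, rfl⟩
      show ℓ (x * y) < r (n + 1)
      linarith [hmul x y, hr_succ n])
    (Set.iUnion_eq_univ_iff.2 fun x => by
      obtain ⟨n, hn⟩ := pow_unbounded_of_one_lt (ℓ x + C) (one_lt_two : (1 : ℝ) < 2)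
      refine ⟨n, show ℓ x < r n from ?_⟩
      nlinarith [pow_pos (two_pos : (0 : ℝ) < 2) n])
  exact ⟨r k, fun x hx => hk hx⟩

end QuasiSubadditive

theorem dist_mul_one_le_of_leftInvariant {H : Type*} [Group H] [PseudoMetricSpace H]
    (hd : ∀ k g h : H, dist (k * g) (k * h) = dist g h) (a b : H) :
    dist (a * b) 1 ≤ dist a 1 + dist b 1 := by
  have hb : dist (a * b) a = dist b 1 := by simpa using hd a b 1
  linarith [dist_triangle (a * b) a 1]

theorem bounded_image_under_continuous_quasiHom_of_exhaustion_property_general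
    {G : Type*} [Group G] [TopologicalSpace G] (A : Set G)
    (hA : ∀ V : ℕ → Set G, (∀ n, IsOpen (V n)) → (∀ n, V n ⊆ V (n + 1)) →
      (∀ n, V n * V n ⊆ V (n + 1)) → (⋃ n, V n) = Set.univ → ∃ k, A ⊆ V k)
    (H : Type*) [Group H] [MetricSpace H]
    (hd : ∀ k g h : H, dist (k * g) (k * h) = dist g h)
    (f : G → H) (hf : Continuous f)
    (C : ℝ) (hqh : ∀ x y : G, dist (f (x * y)) (f x * f y) ≤ C) :
    Bornology.IsBounded (f '' A) := by
  have hC : 0 ≤ C := dist_nonneg.trans (hqh 1 1)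
  have hmul (x y : G) : dist (f (x * y)) 1 ≤ dist (f x) 1 + dist (f y) 1 + C := by
    linarith [dist_triangle (f (x * y)) (f x * f y) 1, hqh x y,
      dist_mul_one_le_of_leftInvariant hd (f x) (f y)]
  obtain ⟨R, hR⟩ := IsExhaustionBounded.exists_lt_of_quasiSubadditive
    (ℓ := fun x => dist (f x) 1) hA (hf.dist continuous_const) hC hmul
  exact Metric.isBounded_ball.subset (by rintro _ ⟨x, hx, rfl⟩; exact hR x hx)

/-- If a subset `A` of a topological group `G` is contained in some member of every
increasing exhaustion `V₁ ⊆ V₂ ⊆ ⋯` of `G` by open sets with `Vₙ · Vₙ ⊆ Vₙ₊₁`, then the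
image of `A` under any continuous quasi-homomorphism to a group with a left-invariant
metric is bounded. -/
theorem bounded_image_under_continuous_quasiHom_of_exhaustion_property
    {G : Type*} [Group G] [TopologicalSpace G] [IsTopologicalGroup G] (A : Set G)
    (hA : ∀ V : ℕ → Set G, (∀ n, IsOpen (V n)) → (∀ n, V n ⊆ V (n + 1)) →
      (∀ n, V n * V n ⊆ V (n + 1)) → (⋃ n, V n) = Set.univ → ∃ k, A ⊆ V k)
    (H : Type*) [Group H] [MetricSpace H]
    (hd : ∀ k g h : H, dist (k * g) (k * h) = dist g h)
    (f : G → H) (hf : Continuous f)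
    (C : ℝ) (hC : 0 ≤ C) (hqh : ∀ x y : G, dist (f (x * y)) (f x * f y) ≤ C) :
    Bornology.IsBounded (f '' A) :=
  bounded_image_under_continuous_quasiHom_of_exhaustion_property_general A hA H hd f hf C hqh
end
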